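/- arXiv:math/0702797 — 6 statements merged into one kernel-verified Lean document; each statement's English description precedes it below -/
import Mathlib

section
/- For all integers d ≥ 0, s ≥ 0 and w ∈ ℤ, the number of ehf-triples (a_i, b_i, c_i)_{i≥1} with ∑_i i(a_i+b_i+c_i) = d, ∑_i (a_i+b_i+c_i) = s and ∑_i (c_i − a_i) = w equals the number of ehf'-triples with the same three statistics (both sets are finite). Equivalently, there is a bijection from the set of ehf-triples onto the set of ehf'-triples preserving the three statistics ∑_i i(a_i+b_i+c_i), ∑_i (a_i+b_i+c_i) and ∑_i (c_i − a_i). -/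
set_option maxHeartbeats 1000000


/-- An ehf-triple: a finitely supported sequence `(a_i, b_i, c_i)_{i ≥ 1}` (the argument `i : ℕ`
stands for the index `i+1`) with `a_i + a_{i+1} + b_{i+1} ≤ 1`, `a_i + b_{i+1} + c_{i+1} ≤ 1`,
`a_i + b_i + c_{i+1} ≤ 1` and `b_i + c_i + c_{i+1} ≤ 1` for all `i ≥ 1`. -/
def IsEhf (a b c : ℕ →₀ ℕ) : Prop :=
  ∀ i : ℕ, a i + a (i + 1) + b (i + 1) ≤ 1 ∧ a i + b (i + 1) + c (i + 1) ≤ 1 ∧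
    a i + b i + c (i + 1) ≤ 1 ∧ b i + c i + c (i + 1) ≤ 1

/-- An ehf'-triple: a finitely supported sequence `(a_i, b_i, c_i)_{i ≥ 1}` with
`a_i + a_{i+1} + b_{i+1} ≤ 1`, `a_i + b_i + b_{i+1} ≤ 1`, `b_i + b_{i+1} + c_{i+1} ≤ 1`,
`b_i + c_i + c_{i+1} ≤ 1` and `b_i + a_{i+1} + c_{i+2} ≤ 2` for all `i ≥ 1`. -/
def IsEhf' (a b c : ℕ →₀ ℕ) : Prop :=
  ∀ i : ℕ, a i + a (i + 1) + b (i + 1) ≤ 1 ∧ a i + b i + b (i + 1) ≤ 1 ∧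
    b i + b (i + 1) + c (i + 1) ≤ 1 ∧ b i + c i + c (i + 1) ≤ 1 ∧
    b i + a (i + 1) + c (i + 2) ≤ 2

/-- The statistic `∑_i i (a_i + b_i + c_i)`. -/
def dStat (t : (ℕ →₀ ℕ) × (ℕ →₀ ℕ) × (ℕ →₀ ℕ)) : ℕ :=
  t.1.sum (fun i m => (i + 1) * m) + t.2.1.sum (fun i m => (i + 1) * m) +
    t.2.2.sum (fun i m => (i + 1) * m)

/-- The statistic `∑_i (a_i + b_i + c_i)`. -/
def sStat (t : (ℕ →₀ ℕ) × (ℕ →₀ ℕ) × (ℕ →₀ ℕ)) : ℕ :=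
  t.1.sum (fun _ m => m) + t.2.1.sum (fun _ m => m) + t.2.2.sum (fun _ m => m)

/-- The statistic `∑_i (c_i - a_i)`. -/
def wStat (t : (ℕ →₀ ℕ) × (ℕ →₀ ℕ) × (ℕ →₀ ℕ)) : ℤ :=
  (t.2.2.sum (fun _ m => m) : ℤ) - t.1.sum (fun _ m => m)

namespace Stmt6Aux

def e (b : ℕ → ℕ) : ℕ → ℕ
  | 0 => if b 0 = 0 then 0 else 1
  | i+1 => if b (i+1) = 0 then 0 else e b i + 1

lemma e_zero_of (b : ℕ → ℕ) (i : ℕ) (h : b i = 0) : e b i = 0 := by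
  cases i <;> simp [e, h]

lemma e_succ (b : ℕ → ℕ) (i : ℕ) :
    e b (i+1) = if b (i+1) = 0 then 0 else e b i + 1 := rfl

lemma e_pos_of (b : ℕ → ℕ) (i : ℕ) (h : b i ≠ 0) : 1 ≤ e b i := by
  cases i <;> simp [e, h]

lemma add11 (j : ℕ) : j+1+1 = j+2 := rfl
lemma add21 (j : ℕ) : j+2+1 = j+3 := rfl
lemma add31 (j : ℕ) : j+3+1 = j+4 := rfl

/-- the two unconditional facts about `e` at a successor -/
lemma eD (b : ℕ → ℕ) (i : ℕ) :
    (b (i+1) = 0 ∧ e b (i+1) = 0) ∨ (b (i+1) ≠ 0 ∧ e b (i+1) = e b i + 1) := by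
  rcases eq_or_ne (b (i+1)) 0 with h | h <;> simp [e_succ, h]

lemma eD0 (b : ℕ → ℕ) (i : ℕ) :
    (b i = 0 ∧ e b i = 0) ∨ (b i ≠ 0 ∧ 1 ≤ e b i) := by
  rcases eq_or_ne (b i) 0 with h | h
  · exact Or.inl ⟨h, e_zero_of b i h⟩
  · exact Or.inr ⟨h, e_pos_of b i h⟩

def Fa (a b : ℕ → ℕ) (i : ℕ) : ℕ :=
  if b i = 0 then a i else if e b i % 2 = 1 ∧ b (i+1) ≠ 0 then 1 else 0

def Fb (b : ℕ → ℕ) (i : ℕ) : ℕ :=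
  if b i = 0 then 0 else if e b i % 2 = 1 ∧ b (i+1) = 0 then 1 else 0

def Fc (b c : ℕ → ℕ) (i : ℕ) : ℕ :=
  if b i = 0 then c i else if e b i % 2 = 0 then 1 else 0

def prevA (a : ℕ → ℕ) : ℕ → ℕ
  | 0 => 0
  | j+1 => a j

def inb (a b c : ℕ → ℕ) (i : ℕ) : Prop :=
  b i ≠ 0 ∨ (a i ≠ 0 ∧ c (i+1) ≠ 0) ∨ (c i ≠ 0 ∧ prevA a i ≠ 0)

instance (a b c : ℕ → ℕ) (i : ℕ) : Decidable (inb a b c i) := by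
  unfold inb; infer_instance

def Ga (a b c : ℕ → ℕ) (i : ℕ) : ℕ := if inb a b c i then 0 else a i
def Gb (a b c : ℕ → ℕ) (i : ℕ) : ℕ := if inb a b c i then 1 else 0
def Gc (a b c : ℕ → ℕ) (i : ℕ) : ℕ := if inb a b c i then 0 else c i

def EhfP (a b c : ℕ → ℕ) : Prop :=
  ∀ i : ℕ, a i + a (i + 1) + b (i + 1) ≤ 1 ∧ a i + b (i + 1) + c (i + 1) ≤ 1 ∧
    a i + b i + c (i + 1) ≤ 1 ∧ b i + c i + c (i + 1) ≤ 1

def EhfP' (a b c : ℕ → ℕ) : Prop :=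
  ∀ i : ℕ, a i + a (i + 1) + b (i + 1) ≤ 1 ∧ a i + b i + b (i + 1) ≤ 1 ∧
    b i + b (i + 1) + c (i + 1) ≤ 1 ∧ b i + c i + c (i + 1) ≤ 1 ∧
    b i + a (i + 1) + c (i + 2) ≤ 2

lemma fwd_isEhf' {a b c : ℕ → ℕ} (h : EhfP a b c) : EhfP' (Fa a b) (Fb b) (Fc b c) := by
  intro i
  have H0 := h i
  have H1 := h (i+1)
  have H2 := h (i+2)
  have D0 := eD0 b i
  have D1 := eD b i
  have D2 := eD b (i+1)
  have D3 := eD b (i+2)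
  simp only [add11, add21, add31] at H0 H1 H2 D0 D1 D2 D3
  refine ⟨?_, ?_, ?_, ?_, ?_⟩ <;>
    · simp only [Fa, Fb, Fc, add11, add21, add31]
      split_ifs <;> omega

lemma prevA_succ (a : ℕ → ℕ) (i : ℕ) : prevA a (i+1) = a i := rfl

lemma bwd_isEhf {a b c : ℕ → ℕ} (h : EhfP' a b c) : EhfP (Ga a b c) (Gb a b c) (Gc a b c) := by
  intro i
  have H0 := h i
  have H1 := h (i+1)
  simp only [add11, add21, add31] at H0 H1
  refine ⟨?_, ?_, ?_, ?_⟩ <;>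
    · simp only [Ga, Gb, Gc, prevA_succ, add11, add21, add31]
      split_ifs <;> simp only [inb, prevA_succ] at * <;> omega

lemma inb_fwd {a b c : ℕ → ℕ} (h : EhfP a b c) (i : ℕ) :
    inb (Fa a b) (Fb b) (Fc b c) i ↔ b i ≠ 0 := by
  cases i with
  | zero =>
    have H0 := h 0
    have D1 := eD b 0
    have e0 : e b 0 = if b 0 = 0 then 0 else 1 := rfl
    simp only [inb, Fa, Fb, Fc, prevA]
    rcases eq_or_ne (b 0) 0 with h0 | h0
    · rw [if_pos h0] at e0
      split_ifs <;> omega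
    · rw [if_neg h0] at e0
      split_ifs <;> omega
  | succ j =>
    have Hj := h j
    have Hi := h (j+1)
    have D0 := eD0 b j
    have D1 := eD b j
    have D2 := eD b (j+1)
    simp only [add11, add21, add31] at Hj Hi D0 D1 D2
    simp only [inb, Fa, Fb, Fc, prevA_succ, add11, add21, add31]
    split_ifs <;> omega

lemma GF_eq {a b c : ℕ → ℕ} (h : EhfP a b c) (i : ℕ) :
    Ga (Fa a b) (Fb b) (Fc b c) i = a i ∧ Gb (Fa a b) (Fb b) (Fc b c) i = b i ∧
      Gc (Fa a b) (Fb b) (Fc b c) i = c i := by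
  have hin := inb_fwd h i
  have H0 := h i
  rcases eq_or_ne (b i) 0 with h0 | h0
  · have : ¬ inb (Fa a b) (Fb b) (Fc b c) i := by rw [hin]; omega
    simp only [Ga, Gb, Gc, if_neg this, Fa, Fb, Fc, if_pos h0]
    exact ⟨trivial, by omega, trivial⟩
  · have : inb (Fa a b) (Fb b) (Fc b c) i := by rw [hin]; exact h0
    simp only [Ga, Gb, Gc, if_pos this]
    omega

lemma prevA_a {a b c : ℕ → ℕ} (h : EhfP' a b c) (i : ℕ) : prevA a i + a i ≤ 1 := by
  cases i with
  | zero => have := h 0; simp only [prevA]; omega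
  | succ j => have := h j; simp only [prevA]; omega

lemma parity {a b c : ℕ → ℕ} (h : EhfP' a b c) :
    ∀ i, inb a b c i → (e (Gb a b c) i % 2 = 1 ↔ (a i ≠ 0 ∨ b i ≠ 0)) := by
  intro i
  induction i with
  | zero =>
    intro hi
    have he : e (Gb a b c) 0 = 1 := by
      simp [e, Gb, if_pos hi]
    have H0 := h 0
    simp only [inb, prevA] at hi
    omega
  | succ j IH =>
    intro hi
    by_cases hj : inb a b c j
    · have he : e (Gb a b c) (j+1) = e (Gb a b c) j + 1 := by
        rw [e_succ]
        simp only [Gb, if_pos hi]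
        simp
      specialize IH hj
      have Hj := h j
      have hpj := prevA_a h j
      simp only [inb, prevA_succ] at hi hj
      simp only [add11, add21, add31] at Hj hi hj IH
      omega
    · have hB : Gb a b c j = 0 := by simp only [Gb, if_neg hj]
      have he : e (Gb a b c) (j+1) = 1 := by
        rw [e_succ]
        simp only [Gb, if_pos hi]
        simp [e_zero_of (Gb a b c) j hB]
      have Hj := h j
      simp only [inb, prevA_succ] at hi hj
      simp only [add11, add21, add31] at Hj hi hj
      omega

lemma FG_eq {a b c : ℕ → ℕ} (h : EhfP' a b c) (i : ℕ) :
    Fa (Ga a b c) (Gb a b c) i = a i ∧ Fb (Gb a b c) i = b i ∧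
      Fc (Gb a b c) (Gc a b c) i = c i := by
  have P := parity h i
  have Hi := h i
  have hpi := prevA_a h i
  by_cases hI : inb a b c i
  · have h1 : Gb a b c i = 1 := by simp only [Gb, if_pos hI]
    specialize P hI
    have hIi := hI
    simp only [inb] at hIi
    have g1 : (Gb a b c (i+1) = 1 ∧ (b (i+1) ≠ 0 ∨ (a (i+1) ≠ 0 ∧ c (i+2) ≠ 0) ∨ (c (i+1) ≠ 0 ∧ a i ≠ 0))) ∨
        (Gb a b c (i+1) = 0 ∧ ¬(b (i+1) ≠ 0 ∨ (a (i+1) ≠ 0 ∧ c (i+2) ≠ 0) ∨ (c (i+1) ≠ 0 ∧ a i ≠ 0))) := by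
      by_cases hI1 : inb a b c (i+1)
      · exact Or.inl ⟨by simp only [Gb, if_pos hI1], hI1⟩
      · exact Or.inr ⟨by simp only [Gb, if_neg hI1], hI1⟩
    rcases Nat.mod_two_eq_zero_or_one (e (Gb a b c) i) with he | he <;>
      rcases g1 with ⟨g1, g1'⟩ | ⟨g1, g1'⟩ <;> refine ⟨?_, ?_, ?_⟩ <;>
      simp only [Fa, Fb, Fc, Ga, Gc, h1, g1, he, if_pos hI, one_ne_zero, zero_ne_one, ne_eq, not_true_eq_false,
        not_false_eq_true, and_true, and_false, if_true, if_false] <;> omega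
  · have h0 : Gb a b c i = 0 := by simp only [Gb, if_neg hI]
    have hIi := hI
    simp only [inb] at hIi
    refine ⟨?_, ?_, ?_⟩ <;> simp only [Fa, Fb, Fc, Ga, Gc, h0, if_neg hI, if_true] <;> omega

/-! ### pointwise sum lemmas -/

lemma fwd_point_sum {a b c : ℕ → ℕ} (h : EhfP a b c) (i : ℕ) :
    Fa a b i + Fb b i + Fc b c i = a i + b i + c i := by
  have Hi := h i
  have D0 := eD0 b i
  simp only [Fa, Fb, Fc]
  split_ifs <;> omega

def Ai (b : ℕ → ℕ) (i : ℕ) : ℕ := if e b i % 2 = 1 ∧ b (i+1) ≠ 0 then 1 else 0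
def Ci (b : ℕ → ℕ) (i : ℕ) : ℕ := if b i ≠ 0 ∧ e b i % 2 = 0 then 1 else 0

lemma Fa_eq_Ai {a b c : ℕ → ℕ} (h : EhfP a b c) (i : ℕ) : Fa a b i = a i + Ai b i := by
  have Hi := h i
  have D0 := eD0 b i
  simp only [Fa, Ai]
  split_ifs <;> omega

lemma Fc_eq_Ci {a b c : ℕ → ℕ} (h : EhfP a b c) (i : ℕ) : Fc b c i = c i + Ci b i := by
  have Hi := h i
  have D0 := eD0 b i
  simp only [Fc, Ci]
  split_ifs <;> omega

lemma Ci_succ (b : ℕ → ℕ) (i : ℕ) : Ci b (i+1) = Ai b i := by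
  have D1 := eD b i
  simp only [Ai, Ci]
  split_ifs <;> omega

lemma Ci_zero (b : ℕ → ℕ) : Ci b 0 = 0 := by
  have D0 := eD0 b 0
  have e0 : e b 0 = if b 0 = 0 then 0 else 1 := rfl
  simp only [Ci]
  rcases eq_or_ne (b 0) 0 with h | h
  · simp [h]
  · rw [if_neg h] at e0
    simp [h, e0]

lemma sum_Ci_eq_sum_Ai (b : ℕ → ℕ) (M : ℕ) (hb : b (M+1) = 0) :
    ∑ i ∈ Finset.range (M+1), Ci b i = ∑ i ∈ Finset.range (M+1), Ai b i := by
  rw [Finset.sum_range_succ' (fun i => Ci b i) M, Finset.sum_range_succ (fun i => Ai b i) M]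
  have h1 : Ai b M = 0 := by simp [Ai, hb]
  rw [h1, Ci_zero]
  simp only [Ci_succ, add_zero]

/-! ### Finsupp-level maps -/

lemma ehfP_of {a b c : ℕ →₀ ℕ} (h : IsEhf a b c) : EhfP ⇑a ⇑b ⇑c := h

lemma ehfP'_of {a b c : ℕ →₀ ℕ} (h : IsEhf' a b c) : EhfP' ⇑a ⇑b ⇑c := h

abbrev T3 := (ℕ →₀ ℕ) × (ℕ →₀ ℕ) × (ℕ →₀ ℕ)

noncomputable def fwdT (x : T3) : T3 :=
  (Finsupp.onFinset (x.1.support ∪ x.2.1.support) (Fa x.1 x.2.1) (fun i hi => by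
      simp only [Finset.mem_union, Finsupp.mem_support_iff]
      by_cases hb : x.2.1 i = 0
      · left; simpa [Fa, hb] using hi
      · right; exact hb),
   Finsupp.onFinset x.2.1.support (Fb x.2.1) (fun i hi => by
      simp only [Finsupp.mem_support_iff]
      by_cases hb : x.2.1 i = 0
      · simp [Fb, hb] at hi
      · exact hb),
   Finsupp.onFinset (x.2.1.support ∪ x.2.2.support) (Fc x.2.1 x.2.2) (fun i hi => by
      simp only [Finset.mem_union, Finsupp.mem_support_iff]
      by_cases hb : x.2.1 i = 0
      · right; simpa [Fc, hb] using hi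
      · left; exact hb))

noncomputable def bwdT (x : T3) : T3 :=
  (Finsupp.onFinset x.1.support (Ga x.1 x.2.1 x.2.2) (fun i hi => by
      simp only [Finsupp.mem_support_iff]
      by_cases h : inb x.1 x.2.1 x.2.2 i
      · simp [Ga, h] at hi
      · simpa [Ga, h] using hi),
   Finsupp.onFinset (x.1.support ∪ x.2.1.support ∪ x.2.2.support) (Gb x.1 x.2.1 x.2.2)
     (fun i hi => by
      simp only [Finset.mem_union, Finsupp.mem_support_iff]
      by_cases h : inb x.1 x.2.1 x.2.2 i
      · rcases h with h | h | h
        · exact Or.inl (Or.inr h)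
        · exact Or.inl (Or.inl h.1)
        · exact Or.inr h.1
      · simp [Gb, h] at hi),
   Finsupp.onFinset x.2.2.support (Gc x.1 x.2.1 x.2.2) (fun i hi => by
      simp only [Finsupp.mem_support_iff]
      by_cases h : inb x.1 x.2.1 x.2.2 i
      · simp [Gc, h] at hi
      · simpa [Gc, h] using hi))

lemma fwdT_coe1 (x : T3) : ⇑(fwdT x).1 = Fa x.1 x.2.1 := rfl
lemma fwdT_coe2 (x : T3) : ⇑(fwdT x).2.1 = Fb x.2.1 := rfl
lemma fwdT_coe3 (x : T3) : ⇑(fwdT x).2.2 = Fc x.2.1 x.2.2 := rfl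
lemma bwdT_coe1 (x : T3) : ⇑(bwdT x).1 = Ga x.1 x.2.1 x.2.2 := rfl
lemma bwdT_coe2 (x : T3) : ⇑(bwdT x).2.1 = Gb x.1 x.2.1 x.2.2 := rfl
lemma bwdT_coe3 (x : T3) : ⇑(bwdT x).2.2 = Gc x.1 x.2.1 x.2.2 := rfl

lemma fwdT_isEhf' {x : T3} (hx : IsEhf x.1 x.2.1 x.2.2) :
    IsEhf' (fwdT x).1 (fwdT x).2.1 (fwdT x).2.2 := by
  have := fwd_isEhf' (ehfP_of hx)
  intro i
  exact this i

lemma bwdT_isEhf {x : T3} (hx : IsEhf' x.1 x.2.1 x.2.2) :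
    IsEhf (bwdT x).1 (bwdT x).2.1 (bwdT x).2.2 := by
  have := bwd_isEhf (ehfP'_of hx)
  intro i
  exact this i

lemma bwd_fwd {x : T3} (hx : IsEhf x.1 x.2.1 x.2.2) : bwdT (fwdT x) = x := by
  have h := ehfP_of hx
  refine Prod.ext ?_ (Prod.ext ?_ ?_) <;> ext i
  · exact (GF_eq h i).1
  · exact (GF_eq h i).2.1
  · exact (GF_eq h i).2.2

lemma fwd_bwd {x : T3} (hx : IsEhf' x.1 x.2.1 x.2.2) : fwdT (bwdT x) = x := by
  have h := ehfP'_of hx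
  refine Prod.ext ?_ (Prod.ext ?_ ?_) <;> ext i
  · exact (FG_eq h i).1
  · exact (FG_eq h i).2.1
  · exact (FG_eq h i).2.2

/-! ### statistics preservation -/

lemma bound_ex (x : T3) : ∃ M : ℕ, ∀ i, M ≤ i → x.1 i = 0 ∧ x.2.1 i = 0 ∧ x.2.2 i = 0 := by
  refine ⟨(x.1.support ∪ x.2.1.support ∪ x.2.2.support).sup id + 1, fun i hi => ?_⟩
  have key : ∀ f : ℕ →₀ ℕ, f.support ⊆ x.1.support ∪ x.2.1.support ∪ x.2.2.support → f i = 0 := by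
    intro f hf
    by_contra hne
    have : i ∈ x.1.support ∪ x.2.1.support ∪ x.2.2.support := hf (Finsupp.mem_support_iff.2 hne)
    have := Finset.le_sup (f := id) this
    simp only [id] at this
    omega
  exact ⟨key x.1 (by intro j hj; simp [Finset.mem_union]; simp at hj; tauto),
    key x.2.1 (by intro j hj; simp [Finset.mem_union]; simp at hj; tauto),
    key x.2.2 (by intro j hj; simp [Finset.mem_union]; simp at hj; tauto)⟩

lemma sum_range_of {N' : Type*} [AddCommMonoid N'] (f : ℕ →₀ ℕ) (g : ℕ → ℕ → N') (hg : ∀ i, g i 0 = 0) (N : ℕ)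
    (hN : ∀ i, N ≤ i → f i = 0) : f.sum g = ∑ i ∈ Finset.range N, g i (f i) := by
  refine Finsupp.sum_of_support_subset f (fun i hi => Finset.mem_range.2 ?_) g (fun i _ => hg i)
  by_contra hlt
  exact Finsupp.mem_support_iff.1 hi (hN i (by omega))

lemma fwd_dStat {x : T3} (hx : IsEhf x.1 x.2.1 x.2.2) : dStat (fwdT x) = dStat x := by
  obtain ⟨M, hM⟩ := bound_ex x
  have hM1 : ∀ i, M ≤ i → x.1 i = 0 := fun i hi => (hM i hi).1
  have hM2 : ∀ i, M ≤ i → x.2.1 i = 0 := fun i hi => (hM i hi).2.1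
  have hM3 : ∀ i, M ≤ i → x.2.2 i = 0 := fun i hi => (hM i hi).2.2
  have hF1 : ∀ i, M ≤ i → (fwdT x).1 i = 0 := fun i hi => by
    show Fa x.1 x.2.1 i = 0; simp [Fa, hM2 i hi, hM1 i hi]
  have hF2 : ∀ i, M ≤ i → (fwdT x).2.1 i = 0 := fun i hi => by
    show Fb x.2.1 i = 0; simp [Fb, hM2 i hi]
  have hF3 : ∀ i, M ≤ i → (fwdT x).2.2 i = 0 := fun i hi => by
    show Fc x.2.1 x.2.2 i = 0; simp [Fc, hM2 i hi, hM3 i hi]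
  unfold dStat
  rw [sum_range_of _ _ (by simp) M hF1, sum_range_of _ _ (by simp) M hF2,
    sum_range_of _ _ (by simp) M hF3, sum_range_of _ _ (by simp) M hM1,
    sum_range_of _ _ (by simp) M hM2, sum_range_of _ _ (by simp) M hM3]
  rw [← Finset.sum_add_distrib, ← Finset.sum_add_distrib, ← Finset.sum_add_distrib,
    ← Finset.sum_add_distrib]
  refine Finset.sum_congr rfl (fun i _ => ?_)
  have := fwd_point_sum (ehfP_of hx) i
  simp only [fwdT_coe1, fwdT_coe2, fwdT_coe3]
  rw [← Nat.mul_add, ← Nat.mul_add, ← Nat.mul_add, ← Nat.mul_add]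
  rw [show Fa x.1 x.2.1 i + Fb x.2.1 i + Fc x.2.1 x.2.2 i = x.1 i + x.2.1 i + x.2.2 i from this]

lemma fwd_sStat {x : T3} (hx : IsEhf x.1 x.2.1 x.2.2) : sStat (fwdT x) = sStat x := by
  obtain ⟨M, hM⟩ := bound_ex x
  have hM1 : ∀ i, M ≤ i → x.1 i = 0 := fun i hi => (hM i hi).1
  have hM2 : ∀ i, M ≤ i → x.2.1 i = 0 := fun i hi => (hM i hi).2.1
  have hM3 : ∀ i, M ≤ i → x.2.2 i = 0 := fun i hi => (hM i hi).2.2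
  have hF1 : ∀ i, M ≤ i → (fwdT x).1 i = 0 := fun i hi => by
    show Fa x.1 x.2.1 i = 0; simp [Fa, hM2 i hi, hM1 i hi]
  have hF2 : ∀ i, M ≤ i → (fwdT x).2.1 i = 0 := fun i hi => by
    show Fb x.2.1 i = 0; simp [Fb, hM2 i hi]
  have hF3 : ∀ i, M ≤ i → (fwdT x).2.2 i = 0 := fun i hi => by
    show Fc x.2.1 x.2.2 i = 0; simp [Fc, hM2 i hi, hM3 i hi]
  unfold sStat
  rw [sum_range_of _ _ (by simp) M hF1, sum_range_of _ _ (by simp) M hF2,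
    sum_range_of _ _ (by simp) M hF3, sum_range_of _ _ (by simp) M hM1,
    sum_range_of _ _ (by simp) M hM2, sum_range_of _ _ (by simp) M hM3]
  rw [← Finset.sum_add_distrib, ← Finset.sum_add_distrib, ← Finset.sum_add_distrib,
    ← Finset.sum_add_distrib]
  exact Finset.sum_congr rfl (fun i _ => fwd_point_sum (ehfP_of hx) i)

lemma fwd_wStat {x : T3} (hx : IsEhf x.1 x.2.1 x.2.2) : wStat (fwdT x) = wStat x := by
  obtain ⟨M, hM⟩ := bound_ex x
  have hM1 : ∀ i, M + 1 ≤ i → x.1 i = 0 := fun i hi => (hM i (by omega)).1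
  have hM2 : ∀ i, M + 1 ≤ i → x.2.1 i = 0 := fun i hi => (hM i (by omega)).2.1
  have hM3 : ∀ i, M + 1 ≤ i → x.2.2 i = 0 := fun i hi => (hM i (by omega)).2.2
  have hF1 : ∀ i, M + 1 ≤ i → (fwdT x).1 i = 0 := fun i hi => by
    show Fa x.1 x.2.1 i = 0; simp [Fa, hM2 i hi, hM1 i hi]
  have hF3 : ∀ i, M + 1 ≤ i → (fwdT x).2.2 i = 0 := fun i hi => by
    show Fc x.2.1 x.2.2 i = 0; simp [Fc, hM2 i hi, hM3 i hi]
  have key : (∑ i ∈ Finset.range (M+1), Fc x.2.1 x.2.2 i) + ∑ i ∈ Finset.range (M+1), (x.1 : ℕ → ℕ) i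
      = (∑ i ∈ Finset.range (M+1), (x.2.2 : ℕ → ℕ) i) + ∑ i ∈ Finset.range (M+1), Fa x.1 x.2.1 i := by
    have e1 : ∑ i ∈ Finset.range (M+1), Fc x.2.1 x.2.2 i
        = (∑ i ∈ Finset.range (M+1), (x.2.2 : ℕ → ℕ) i) + ∑ i ∈ Finset.range (M+1), Ci x.2.1 i := by
      rw [← Finset.sum_add_distrib]
      exact Finset.sum_congr rfl (fun i _ => Fc_eq_Ci (ehfP_of hx) i)
    have e2 : ∑ i ∈ Finset.range (M+1), Fa x.1 x.2.1 i
        = (∑ i ∈ Finset.range (M+1), (x.1 : ℕ → ℕ) i) + ∑ i ∈ Finset.range (M+1), Ai x.2.1 i := by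
      rw [← Finset.sum_add_distrib]
      exact Finset.sum_congr rfl (fun i _ => Fa_eq_Ai (ehfP_of hx) i)
    have e3 := sum_Ci_eq_sum_Ai x.2.1 M (hM2 (M+1) le_rfl)
    omega
  unfold wStat
  rw [sum_range_of ((fwdT x).2.2) (fun _ m => (m : ℤ)) (by simp) (M+1) hF3,
      sum_range_of ((fwdT x).1) (fun _ m => m) (by simp) (M+1) hF1,
      sum_range_of (x.2.2) (fun _ m => (m : ℤ)) (by simp) (M+1) hM3,
      sum_range_of (x.1) (fun _ m => m) (by simp) (M+1) hM1]
  have hc3 : ∀ i, ((fwdT x).2.2) i = Fc x.2.1 x.2.2 i := fun i => rfl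
  have hc1 : ∀ i, ((fwdT x).1) i = Fa x.1 x.2.1 i := fun i => rfl
  simp only [hc3, hc1]
  have key' := congrArg (Nat.cast : ℕ → ℤ) key
  push_cast at key' ⊢
  linarith

lemma val_le_one_of_ehf {a b c : ℕ →₀ ℕ} (h : IsEhf a b c) (i : ℕ) :
    a i ≤ 1 ∧ b i ≤ 1 ∧ c i ≤ 1 := by
  have := h i; omega

lemma val_le_one_of_ehf' {a b c : ℕ →₀ ℕ} (h : IsEhf' a b c) (i : ℕ) :
    a i ≤ 1 ∧ b i ≤ 1 ∧ c i ≤ 1 := by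
  have := h i; omega

noncomputable def capF (d : ℕ) : ℕ →₀ ℕ :=
  Finsupp.onFinset (Finset.range d) (fun i => if i < d then 1 else 0) (fun i hi => by
    simp only [Finset.mem_range]
    by_contra hlt
    simp [if_neg hlt] at hi)

lemma le_capF {f : ℕ →₀ ℕ} {d : ℕ} (h1 : ∀ i, f i ≤ 1)
    (h2 : f.sum (fun i m => (i + 1) * m) ≤ d) : f ≤ capF d := by
  rw [Finsupp.le_def]
  intro i
  have hcap : capF d i = if i < d then 1 else 0 := rfl
  rw [hcap]
  by_cases hid : i < d
  · rw [if_pos hid]; exact h1 i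
  · rw [if_neg hid]
    by_contra hne
    have hmem : i ∈ f.support := Finsupp.mem_support_iff.2 (by omega)
    have hle : (i + 1) * f i ≤ ∑ j ∈ f.support, (j + 1) * f j :=
      Finset.single_le_sum (f := fun j => (j + 1) * f j) (fun j _ => Nat.zero_le _) hmem
    have hsum : f.sum (fun i m => (i + 1) * m) = ∑ j ∈ f.support, (j + 1) * f j := rfl
    have hfi : 1 ≤ f i := by omega
    have : i + 1 ≤ (i + 1) * f i := Nat.le_mul_of_pos_right _ (by omega)
    omega

lemma finite_fiber (Q : T3 → Prop)
    (hQ : ∀ t, Q t → ∀ i, t.1 i ≤ 1 ∧ t.2.1 i ≤ 1 ∧ t.2.2 i ≤ 1) (d : ℕ) (s : ℕ) (w : ℤ) :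
    {t : T3 | Q t ∧ dStat t = d ∧ sStat t = s ∧ wStat t = w}.Finite := by
  refine Set.Finite.subset
    (((Set.finite_Iic (capF d)).prod ((Set.finite_Iic (capF d)).prod
      (Set.finite_Iic (capF d))))) ?_
  rintro t ⟨hQt, hd, -, -⟩
  have hb := hQ t hQt
  have h1 : t.1 ≤ capF d := le_capF (fun i => (hb i).1) (by unfold dStat at hd; omega)
  have h2 : t.2.1 ≤ capF d := le_capF (fun i => (hb i).2.1) (by unfold dStat at hd; omega)
  have h3 : t.2.2 ≤ capF d := le_capF (fun i => (hb i).2.2) (by unfold dStat at hd; omega)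
  exact ⟨h1, h2, h3⟩

end Stmt6Aux

/-- For all `d, s ≥ 0` and `w ∈ ℤ` the (finite) sets of ehf-triples and of
ehf'-triples with `∑_i i(a_i+b_i+c_i) = d`, `∑_i (a_i+b_i+c_i) = s`, `∑_i (c_i - a_i) = w` are
equinumerous; equivalently, there is a bijection from ehf-triples onto ehf'-triples preserving
the three statistics. -/



theorem stmt6 :
    (∀ (d s : ℕ) (w : ℤ),
      { t : (ℕ →₀ ℕ) × (ℕ →₀ ℕ) × (ℕ →₀ ℕ) |
          IsEhf t.1 t.2.1 t.2.2 ∧ dStat t = d ∧ sStat t = s ∧ wStat t = w }.Finite ∧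
      { t : (ℕ →₀ ℕ) × (ℕ →₀ ℕ) × (ℕ →₀ ℕ) |
          IsEhf' t.1 t.2.1 t.2.2 ∧ dStat t = d ∧ sStat t = s ∧ wStat t = w }.Finite ∧
      { t : (ℕ →₀ ℕ) × (ℕ →₀ ℕ) × (ℕ →₀ ℕ) |
          IsEhf t.1 t.2.1 t.2.2 ∧ dStat t = d ∧ sStat t = s ∧ wStat t = w }.ncard =
        { t : (ℕ →₀ ℕ) × (ℕ →₀ ℕ) × (ℕ →₀ ℕ) |
          IsEhf' t.1 t.2.1 t.2.2 ∧ dStat t = d ∧ sStat t = s ∧ wStat t = w }.ncard) ∧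
    ∃ φ : { t : (ℕ →₀ ℕ) × (ℕ →₀ ℕ) × (ℕ →₀ ℕ) // IsEhf t.1 t.2.1 t.2.2 } ≃
        { t : (ℕ →₀ ℕ) × (ℕ →₀ ℕ) × (ℕ →₀ ℕ) // IsEhf' t.1 t.2.1 t.2.2 },
      ∀ t, dStat (φ t).1 = dStat t.1 ∧ sStat (φ t).1 = sStat t.1 ∧ wStat (φ t).1 = wStat t.1 := by
    open Stmt6Aux in
  constructor
  · intro d s w
    set S := { t : (ℕ →₀ ℕ) × (ℕ →₀ ℕ) × (ℕ →₀ ℕ) |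
        IsEhf t.1 t.2.1 t.2.2 ∧ dStat t = d ∧ sStat t = s ∧ wStat t = w } with hS
    set S' := { t : (ℕ →₀ ℕ) × (ℕ →₀ ℕ) × (ℕ →₀ ℕ) |
        IsEhf' t.1 t.2.1 t.2.2 ∧ dStat t = d ∧ sStat t = s ∧ wStat t = w } with hS'
    have hfin : S.Finite := finite_fiber _ (fun t ht i => val_le_one_of_ehf ht i) d s w
    have hfin' : S'.Finite := finite_fiber _ (fun t ht i => val_le_one_of_ehf' ht i) d s w
    refine ⟨hfin, hfin', ?_⟩
    have himg : fwdT '' S = S' := by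
      ext y
      constructor
      · rintro ⟨u, ⟨hu, hud, hus, huw⟩, rfl⟩
        exact ⟨fwdT_isEhf' hu, by rw [fwd_dStat hu]; exact hud,
          by rw [fwd_sStat hu]; exact hus, by rw [fwd_wStat hu]; exact huw⟩
      · rintro ⟨hy, hyd, hys, hyw⟩
        refine ⟨bwdT y, ⟨bwdT_isEhf hy, ?_, ?_, ?_⟩, fwd_bwd hy⟩
        · rw [← fwd_dStat (bwdT_isEhf hy), fwd_bwd hy]; exact hyd
        · rw [← fwd_sStat (bwdT_isEhf hy), fwd_bwd hy]; exact hys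
        · rw [← fwd_wStat (bwdT_isEhf hy), fwd_bwd hy]; exact hyw
    have hinj : Set.InjOn fwdT S := by
      intro u hu v hv huv
      have := congrArg bwdT huv
      rwa [bwd_fwd hu.1, bwd_fwd hv.1] at this
    rw [← himg]
    exact (Set.ncard_image_of_injOn hinj).symm
  · refine ⟨⟨fun t => ⟨fwdT t.1, fwdT_isEhf' t.2⟩, fun t => ⟨bwdT t.1, bwdT_isEhf t.2⟩,
      fun t => Subtype.ext (bwd_fwd t.2), fun t => Subtype.ext (fwd_bwd t.2)⟩, ?_⟩
    intro t
    exact ⟨fwd_dStat t.2, fwd_sStat t.2, fwd_wStat t.2⟩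
end

section
/- The images in B_1 of the monomials ∏_{i≥1} f̃_i^{a_i} h̃_i^{b_i} ẽ_i^{c_i}, where (a_i, b_i, c_i)_{i≥1} ranges over all ehf'-triples, span B_1 as a vector space over ℂ. -/
open MvPolynomial

/-- Variable index type for the algebras `A_k`, `B_k`:
`(0, n)` is `ẽ_{n+1}`, `(1, n)` is `h̃_{n+1}`, `(2, n)` is `f̃_{n+1}`. -/
abbrev Vr : Type := Fin 3 × ℕ

/-- z-degrees of the three families of variables: `deg_z ẽ = 2`, `deg_z h̃ = 0`, `deg_z f̃ = -2`. -/
def zdeg3 : Fin 3 → ℤ := ![2, 0, -2]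

/-- q-degree of a monomial: `deg_q x̃_n = n` (the variable `(x, n)` is `x̃_{n+1}`). -/
def qdegMon (u : Vr →₀ ℕ) : ℕ := u.sum fun v m => m * (v.2 + 1)

/-- z-degree of a monomial. -/
def zdegMon (u : Vr →₀ ℕ) : ℤ := u.sum fun v m => (m : ℤ) * zdeg3 v.1

/-- u-degree of a monomial: every variable has u-degree 1. -/
def udegMon (u : Vr →₀ ℕ) : ℕ := u.sum fun _ m => m

/-- The span of the monomials of q-degree `d`, z-degree `z` and u-degree `s`. -/
noncomputable def comp3 (d : ℕ) (z : ℤ) (s : ℕ) : Submodule ℂ (MvPolynomial Vr ℂ) :=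
  Submodule.span ℂ
    { p | ∃ u : Vr →₀ ℕ, qdegMon u = d ∧ zdegMon u = z ∧ udegMon u = s ∧ p = monomial u 1 }

/-- The coefficient of the product of `k+1` series `x̃(z) = ∑_{n ≥ 1} x̃_n z^{n-1}` of the
types prescribed by `ty`, at the `N`-th place (indices of the variables summing to `N + (k+1)`). -/
noncomputable def genSeries (k : ℕ) (ty : Fin (k + 1) → Fin 3) (N : ℕ) : MvPolynomial Vr ℂ :=
  ∑ t ∈ Finset.Nat.antidiagonalTuple (k + 1) N, ∏ j, X (ty j, t j)

/-- The defining ideal of `B_k`: generated by the coefficients of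
`ẽ(z)^i h̃(z)^{k+1-i}` for `1 ≤ i ≤ k+1` and of `h̃(z)^i f̃(z)^{k+1-i}` for `0 ≤ i ≤ k+1`. -/
noncomputable def idealB (k : ℕ) : Ideal (MvPolynomial Vr ℂ) :=
  Ideal.span
    ({ p | ∃ i, 1 ≤ i ∧ i ≤ k + 1 ∧
        ∃ N, p = genSeries k (fun j => if (j : ℕ) < i then (0 : Fin 3) else 1) N } ∪
     { p | ∃ i, i ≤ k + 1 ∧
        ∃ N, p = genSeries k (fun j => if (j : ℕ) < i then (1 : Fin 3) else 2) N })

/-- The `sl₂`-lowering derivation `D` with `D ẽ_n = h̃_n`, `D h̃_n = 2 f̃_n`, `D f̃_n = 0`. -/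
noncomputable def Dlow : Derivation ℂ (MvPolynomial Vr ℂ) (MvPolynomial Vr ℂ) :=
  mkDerivation ℂ (fun v =>
    if v.1 = 0 then X (1, v.2) else if v.1 = 1 then (2 : ℂ) • X (2, v.2) else 0)

/-- The defining ideal of `A_k`: generated by the coefficients of the `2k+3` series
`D^j (ẽ(z)^{k+1})`, `0 ≤ j ≤ 2k+2`. -/
noncomputable def idealA (k : ℕ) : Ideal (MvPolynomial Vr ℂ) :=
  Ideal.span
    { p | ∃ j ≤ 2 * k + 2, ∃ N, p = (Dlow.toLinearMap ^ j) (genSeries k (fun _ => 0) N) }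

/-- `(q)_n = ∏_{i=1}^n (1 - q^i)` in `ℤ[[q]]`. -/
noncomputable def qPoch (n : ℕ) : PowerSeries ℤ :=
  ∏ i ∈ Finset.range n, (1 - PowerSeries.X ^ (i + 1))

/-- The inverse `1/(q)_n` in `ℤ[[q]]` (well defined since `(q)_n` has constant term `1`). -/
noncomputable def qPochInv (n : ℕ) : PowerSeries ℤ := PowerSeries.invOfUnit (qPoch n) 1


/-- The monomial `∏_{i ≥ 1} f̃_i^{a_i} h̃_i^{b_i} ẽ_i^{c_i}`. -/
noncomputable def ehfMonomial (a b c : ℕ →₀ ℕ) : MvPolynomial Vr ℂ :=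
  (a.prod fun i m => X (2, i) ^ m) * (b.prod fun i m => X (1, i) ^ m) *
    c.prod fun i m => X (0, i) ^ m

section Measures

open Finsupp

/-- `∑_{v ∈ t} t v * min v.2 c`. -/
def crossC (t : Vr →₀ ℕ) (c : ℕ) : ℕ := t.sum fun v m => m * min v.2 c

/-- `∑_{v ∈ a, w ∈ b} a v * b w * min v.2 w.2`. -/
def crossM (a b : Vr →₀ ℕ) : ℕ := a.sum fun v m => m * crossC b v.2

def phiM (u : Vr →₀ ℕ) : ℕ := crossM u u

def psiM (u : Vr →₀ ℕ) : ℕ := u.sum fun v m => m * ((2 - (v.1 : ℕ)) * v.2)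

def psi2M (u : Vr →₀ ℕ) : ℕ := u.sum fun v m => m * (if v.1 = 0 then v.2 else 0)

def muM (u : Vr →₀ ℕ) : ℕ :=
  (2 * qdegMon u + 1) * (qdegMon u + 1) * phiM u + (qdegMon u + 1) * psiM u + psi2M u

lemma sumlin_add (g : Vr → ℕ) (a b : Vr →₀ ℕ) :
    ((a + b).sum fun v m => m * g v) = (a.sum fun v m => m * g v) + b.sum fun v m => m * g v :=
  Finsupp.sum_add_index' (fun _ => by simp) (fun _ _ _ => add_mul _ _ _)

lemma sumlin_single (g : Vr → ℕ) (v : Vr) (m : ℕ) :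
    ((Finsupp.single v m).sum fun v m => m * g v) = m * g v :=
  Finsupp.sum_single_index (by simp)

lemma qdeg_add (a b : Vr →₀ ℕ) : qdegMon (a + b) = qdegMon a + qdegMon b :=
  sumlin_add (fun v => v.2 + 1) a b

lemma qdeg_single (v : Vr) (m : ℕ) : qdegMon (Finsupp.single v m) = m * (v.2 + 1) :=
  sumlin_single _ v m

lemma psi_add (a b : Vr →₀ ℕ) : psiM (a + b) = psiM a + psiM b := sumlin_add _ a b

lemma psi_single (v : Vr) (m : ℕ) : psiM (Finsupp.single v m) = m * ((2 - (v.1 : ℕ)) * v.2) :=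
  sumlin_single _ v m

lemma psi2_add (a b : Vr →₀ ℕ) : psi2M (a + b) = psi2M a + psi2M b := sumlin_add _ a b

lemma psi2_single (v : Vr) (m : ℕ) :
    psi2M (Finsupp.single v m) = m * (if v.1 = 0 then v.2 else 0) := sumlin_single _ v m

lemma crossC_add (a b : Vr →₀ ℕ) (c : ℕ) : crossC (a + b) c = crossC a c + crossC b c :=
  sumlin_add _ a b

lemma crossC_single (v : Vr) (m : ℕ) (c : ℕ) :
    crossC (Finsupp.single v m) c = m * min v.2 c := sumlin_single _ v m

lemma crossM_add_left (a b t : Vr →₀ ℕ) : crossM (a + b) t = crossM a t + crossM b t :=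
  sumlin_add _ a b

lemma crossM_single_left (v : Vr) (m : ℕ) (t : Vr →₀ ℕ) :
    crossM (Finsupp.single v m) t = m * crossC t v.2 := sumlin_single _ v m

lemma crossM_add_right (a t s : Vr →₀ ℕ) : crossM a (t + s) = crossM a t + crossM a s := by
  unfold crossM
  rw [← Finsupp.sum_add]
  exact Finsupp.sum_congr fun v _ => by rw [crossC_add, Nat.mul_add]

lemma crossM_expand (a b : Vr →₀ ℕ) :
    crossM a b = a.sum fun v m => b.sum fun w m' => m * (m' * min w.2 v.2) := by
  unfold crossM crossC
  exact Finsupp.sum_congr fun v _ => by rw [Finsupp.mul_sum]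

lemma crossM_comm (a b : Vr →₀ ℕ) : crossM a b = crossM b a := by
  rw [crossM_expand, crossM_expand, Finsupp.sum_comm]
  refine Finsupp.sum_congr fun w _ => Finsupp.sum_congr fun v _ => ?_
  rw [min_comm]; ring

lemma phi_add (a b : Vr →₀ ℕ) : phiM (a + b) = phiM a + phiM b + 2 * crossM a b := by
  unfold phiM
  rw [crossM_add_left, crossM_add_right, crossM_add_right, crossM_comm b a]; ring

lemma phi_single (v : Vr) (m : ℕ) : phiM (Finsupp.single v m) = m * (m * v.2) := by
  unfold phiM
  rw [crossM_single_left, crossC_single, min_self]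

lemma crossM_single_single (v w : Vr) (m m' : ℕ) :
    crossM (Finsupp.single v m) (Finsupp.single w m') = m * (m' * min w.2 v.2) := by
  rw [crossM_single_left, crossC_single]

lemma psi_le (u : Vr →₀ ℕ) : psiM u ≤ 2 * qdegMon u := by
  unfold psiM qdegMon
  rw [Finsupp.mul_sum]
  exact Finset.sum_le_sum fun v _ => by
    have : (2 - ((v.1 : Fin 3) : ℕ)) ≤ 2 := by omega
    calc u v * ((2 - ((v.1 : Fin 3) : ℕ)) * v.2) ≤ u v * (2 * (v.2 + 1)) := by
          apply Nat.mul_le_mul_left; nlinarith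
      _ = 2 * (u v * (v.2 + 1)) := by ring

lemma psi2_le (u : Vr →₀ ℕ) : psi2M u ≤ qdegMon u := by
  unfold psi2M qdegMon
  exact Finset.sum_le_sum fun v _ => by
    apply Nat.mul_le_mul_left
    split <;> omega

lemma crossM_mono_right (u₀ t T : Vr →₀ ℕ) (h : ∀ c, crossC t c ≤ crossC T c) :
    crossM u₀ t ≤ crossM u₀ T :=
  Finset.sum_le_sum fun v _ => Nat.mul_le_mul_left _ (h v.2)

lemma crossM_congr_right (u₀ t T : Vr →₀ ℕ) (h : ∀ c, crossC t c = crossC T c) :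
    crossM u₀ t = crossM u₀ T :=
  Finset.sum_congr rfl fun v _ => by dsimp only; rw [h v.2]

lemma mu_arith (d p0 pt pT c0t c0T s0 st sT r0 rt rT : ℕ)
    (hs : st ≤ 2 * d) (hr : rt ≤ d)
    (h : (c0t ≤ c0T ∧ pt < pT)
       ∨ (c0t = c0T ∧ pt = pT ∧ (st < sT ∨ (st = sT ∧ rt < rT)))) :
    (2 * d + 1) * (d + 1) * (p0 + pt + 2 * c0t) + (d + 1) * (s0 + st) + (r0 + rt) <
    (2 * d + 1) * (d + 1) * (p0 + pT + 2 * c0T) + (d + 1) * (s0 + sT) + (r0 + rT) := by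
  rcases h with ⟨hc, hp⟩ | ⟨hc, hp, hst | ⟨hst, hrt⟩⟩
  · have h1 : (2 * d + 1) * (d + 1) * (p0 + pt + 2 * c0t) + (2 * d + 1) * (d + 1)
        ≤ (2 * d + 1) * (d + 1) * (p0 + pT + 2 * c0T) := by
      have h0 : (p0 + pt + 2 * c0t) + 1 ≤ p0 + pT + 2 * c0T := by omega
      calc (2 * d + 1) * (d + 1) * (p0 + pt + 2 * c0t) + (2 * d + 1) * (d + 1)
          = (2 * d + 1) * (d + 1) * ((p0 + pt + 2 * c0t) + 1) := by ring
        _ ≤ _ := Nat.mul_le_mul_left _ h0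
    have e1 : (d + 1) * (s0 + st) = (d + 1) * s0 + (d + 1) * st := by ring
    have e2 : (d + 1) * (s0 + sT) = (d + 1) * s0 + (d + 1) * sT := by ring
    have e3 : (d + 1) * st ≤ (d + 1) * (2 * d) := Nat.mul_le_mul_left _ hs
    have e4 : (2 * d + 1) * (d + 1) = (d + 1) * (2 * d) + (d + 1) := by ring
    omega
  · subst hc hp
    have h1 : (d + 1) * (s0 + st) + (d + 1) ≤ (d + 1) * (s0 + sT) := by
      have : (s0 + st) + 1 ≤ s0 + sT := by omega
      calc (d + 1) * (s0 + st) + (d + 1) = (d + 1) * ((s0 + st) + 1) := by ring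
        _ ≤ _ := Nat.mul_le_mul_left _ this
    omega
  · subst hc hp hst
    omega

/-- The master comparison lemma for the measure `muM`. -/
lemma muM_lt (u₀ t T : Vr →₀ ℕ) (hq : qdegMon t = qdegMon T)
    (h : ((∀ c, crossC t c ≤ crossC T c) ∧ phiM t < phiM T)
       ∨ ((∀ c, crossC t c = crossC T c) ∧ phiM t = phiM T ∧
          (psiM t < psiM T ∨ (psiM t = psiM T ∧ psi2M t < psi2M T)))) :
    muM (u₀ + t) < muM (u₀ + T) := by
  have hqq : qdegMon (u₀ + t) = qdegMon (u₀ + T) := by rw [qdeg_add, qdeg_add, hq]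
  unfold muM
  rw [hqq]
  set d := qdegMon (u₀ + T) with hd
  have hψb : psiM (u₀ + t) ≤ 2 * d := by rw [← hqq]; exact psi_le _
  have hψ2b : psi2M (u₀ + t) ≤ d := by rw [← hqq]; exact psi2_le _
  rw [phi_add, phi_add, psi_add, psi_add, psi2_add, psi2_add] at *
  have hst : psiM t ≤ 2 * d := by omega
  have hrt : psi2M t ≤ d := by omega
  apply mu_arith d (phiM u₀) (phiM t) (phiM T) (crossM u₀ t) (crossM u₀ T)
    (psiM u₀) (psiM t) (psiM T) (psi2M u₀) (psi2M t) (psi2M T) hst hrt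
  rcases h with ⟨hc, hφ⟩ | ⟨hc, hφ, hrest⟩
  · exact Or.inl ⟨crossM_mono_right _ _ _ hc, hφ⟩
  · exact Or.inr ⟨crossM_congr_right _ _ _ hc, hφ, hrest⟩

end Measures
section Algebra

/-- The span of images of ehf'-monomials. -/
noncomputable def SPan : Submodule ℂ (MvPolynomial Vr ℂ ⧸ idealB 1) :=
  Submodule.span ℂ
    { q : MvPolynomial Vr ℂ ⧸ idealB 1 |
      ∃ a b c : ℕ →₀ ℕ, IsEhf' a b c ∧ q = Ideal.Quotient.mk (idealB 1) (ehfMonomial a b c) }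

lemma genSeries_one (ty : Fin 2 → Fin 3) (N : ℕ) :
    genSeries 1 ty N = ∑ p ∈ Finset.HasAntidiagonal.antidiagonal N, X (ty 0, p.1) * X (ty 1, p.2) := by
  unfold genSeries
  rw [Finset.Nat.antidiagonalTuple_two, Finset.sum_map]
  refine Finset.sum_congr rfl fun p _ => ?_
  rw [Fin.prod_univ_two]
  simp [piFinTwoEquiv]

lemma rel_mem (x y : Fin 3) (N : ℕ)
    (hxy : (x, y) = (0, 0) ∨ (x, y) = (0, 1) ∨ (x, y) = (1, 1) ∨ (x, y) = (1, 2) ∨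
      (x, y) = (2, 2)) :
    (∑ p ∈ Finset.HasAntidiagonal.antidiagonal N, (X (x, p.1) * X (y, p.2) : MvPolynomial Vr ℂ)) ∈ idealB 1 := by
  apply Ideal.subset_span
  rcases hxy with h | h | h | h | h <;> rw [Prod.ext_iff] at h <;> obtain ⟨h1, h2⟩ := h <;>
    subst h1 h2
  · exact Or.inl ⟨2, by norm_num, by norm_num, N, by
      rw [genSeries_one]; refine Finset.sum_congr rfl fun p _ => by norm_num⟩
  · exact Or.inl ⟨1, le_refl 1, by norm_num, N, by
      rw [genSeries_one]; refine Finset.sum_congr rfl fun p _ => by norm_num⟩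
  · exact Or.inr ⟨2, by norm_num, N, by
      rw [genSeries_one]; refine Finset.sum_congr rfl fun p _ => by norm_num⟩
  · exact Or.inr ⟨1, by norm_num, N, by
      rw [genSeries_one]; refine Finset.sum_congr rfl fun p _ => by norm_num⟩
  · exact Or.inr ⟨0, by norm_num, N, by
      rw [genSeries_one]; refine Finset.sum_congr rfl fun p _ => by norm_num⟩

lemma mon_mul_X2 (u₀ : Vr →₀ ℕ) (v w : Vr) :
    (monomial u₀ 1 : MvPolynomial Vr ℂ) * (X v * X w) =
      monomial (u₀ + (Finsupp.single v 1 + Finsupp.single w 1)) 1 := by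
  simp [X, monomial_mul, add_assoc]

lemma mon_mul_X3 (u₀ : Vr →₀ ℕ) (v w z : Vr) :
    (monomial u₀ 1 : MvPolynomial Vr ℂ) * (X v * X w * X z) =
      monomial (u₀ + (Finsupp.single v 1 + Finsupp.single w 1 + Finsupp.single z 1)) 1 := by
  simp [X, monomial_mul, add_assoc]

/-- Master reduction lemma for a quadratic relation. -/
lemma reduce_pair (x y : Fin 3)
    (hxy : (x, y) = (0, 0) ∨ (x, y) = (0, 1) ∨ (x, y) = (1, 1) ∨ (x, y) = (1, 2) ∨
      (x, y) = (2, 2))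
    (u u₀ : Vr →₀ ℕ) (p q : ℕ)
    (hu : u = u₀ + (Finsupp.single (x, p) 1 + Finsupp.single (y, q) 1))
    (hsmall : ∀ i j : ℕ, i + j = p + q →
      u₀ + (Finsupp.single (x, i) 1 + Finsupp.single (y, j) 1) ≠
        u₀ + (Finsupp.single (x, p) 1 + Finsupp.single (y, q) 1) →
      muM (u₀ + (Finsupp.single (x, i) 1 + Finsupp.single (y, j) 1)) <
        muM (u₀ + (Finsupp.single (x, p) 1 + Finsupp.single (y, q) 1)))
    (IH : ∀ v : Vr →₀ ℕ, muM v < muM u →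
      Ideal.Quotient.mk (idealB 1) (monomial v 1) ∈ SPan) :
    Ideal.Quotient.mk (idealB 1) (monomial u 1) ∈ SPan := by
  set mkq := Ideal.Quotient.mk (idealB 1) with hmkq
  set v : ℕ × ℕ → (Vr →₀ ℕ) := fun ij =>
    u₀ + (Finsupp.single (x, ij.1) 1 + Finsupp.single (y, ij.2) 1) with hv
  have h0 : ∑ ij ∈ Finset.HasAntidiagonal.antidiagonal (p + q), mkq (monomial (v ij) 1) = 0 := by
    have : ∑ ij ∈ Finset.HasAntidiagonal.antidiagonal (p + q), (monomial (v ij) 1 : MvPolynomial Vr ℂ) =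
        monomial u₀ 1 * ∑ ij ∈ Finset.HasAntidiagonal.antidiagonal (p + q), X (x, ij.1) * X (y, ij.2) := by
      rw [Finset.mul_sum]
      exact Finset.sum_congr rfl fun ij _ => (mon_mul_X2 u₀ _ _).symm
    rw [← map_sum, this, hmkq, Ideal.Quotient.eq_zero_iff_mem]
    exact Ideal.mul_mem_left _ _ (rel_mem x y (p + q) hxy)
  set A := Finset.HasAntidiagonal.antidiagonal (p + q) with hA
  rw [← Finset.sum_filter_add_sum_filter_not A (fun ij => v ij = u)] at h0
  have hsum1 : ∑ ij ∈ A.filter (fun ij => v ij = u), mkq (monomial (v ij) 1) =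
      (A.filter (fun ij => v ij = u)).card • mkq (monomial u 1) := by
    rw [← Finset.sum_const]
    exact Finset.sum_congr rfl fun ij hij => by
      rw [(Finset.mem_filter.mp hij).2]
  have hpq : (p, q) ∈ A.filter (fun ij => v ij = u) := by
    exact Finset.mem_filter.mpr ⟨Finset.HasAntidiagonal.mem_antidiagonal.mpr rfl, hu.symm⟩
  set c := (A.filter (fun ij => v ij = u)).card with hc
  have hcpos : 0 < c := Finset.card_pos.mpr ⟨(p, q), hpq⟩
  have hcne : (c : ℂ) ≠ 0 := Nat.cast_ne_zero.mpr hcpos.ne'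
  have hS2 : ∑ ij ∈ A.filter (fun ij => ¬ v ij = u), mkq (monomial (v ij) 1) ∈ SPan := by
    refine Submodule.sum_mem _ fun ij hij => ?_
    rw [Finset.mem_filter] at hij
    rw [hu] at hij
    have := hsmall ij.1 ij.2 (Finset.HasAntidiagonal.mem_antidiagonal.mp hij.1) hij.2
    rw [← hu] at this
    exact IH _ this
  rw [hsum1] at h0
  have key : mkq (monomial u 1) =
      (-(c : ℂ)⁻¹) • ∑ ij ∈ A.filter (fun ij => ¬ v ij = u), mkq (monomial (v ij) 1) := by
    have h1 : (c : ℂ) • mkq (monomial u 1) +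
        ∑ ij ∈ A.filter (fun ij => ¬ v ij = u), mkq (monomial (v ij) 1) = 0 := by
      rw [← h0, Nat.cast_smul_eq_nsmul]
    have := congrArg (fun z => (c : ℂ)⁻¹ • z) h1
    simp only [smul_add, smul_smul, inv_mul_cancel₀ hcne, one_smul, smul_zero] at this
    linear_combination (norm := module) this
  rw [key]
  exact Submodule.smul_mem _ _ hS2

end Algebra
section Patterns

lemma decomp_of_le (u t : Vr →₀ ℕ) (h : t ≤ u) : u = (u - t) + t :=
  (tsub_add_cancel_of_le h).symm

lemma le_of_two (u : Vr →₀ ℕ) (v w : Vr) (hvw : v ≠ w) (h1 : 1 ≤ u v) (h2 : 1 ≤ u w) :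
    Finsupp.single v 1 + Finsupp.single w 1 ≤ u := by
  rw [Finsupp.le_def]
  intro z
  rw [Finsupp.add_apply, Finsupp.single_apply, Finsupp.single_apply]
  by_cases hv : v = z
  · subst hv
    rw [if_pos rfl, if_neg (fun h => hvw h.symm)]
    omega
  · rw [if_neg hv]
    by_cases hw : w = z
    · subst hw; rw [if_pos rfl]; omega
    · rw [if_neg hw]; omega

lemma le_of_double (u : Vr →₀ ℕ) (v : Vr) (h : 2 ≤ u v) :
    Finsupp.single v 1 + Finsupp.single v 1 ≤ u := by
  rw [Finsupp.le_def]
  intro z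
  rw [Finsupp.add_apply, Finsupp.single_apply]
  by_cases hv : v = z
  · subst hv; rw [if_pos rfl]; omega
  · rw [if_neg hv]; omega

/-- `x_n x_n` forbidden, same letter. -/
lemma pat_same (x : Fin 3)
    (hxy : ((x : Fin 3), x) = (0, 0) ∨ ((x : Fin 3), x) = (0, 1) ∨ ((x : Fin 3), x) = (1, 1) ∨
      ((x : Fin 3), x) = (1, 2) ∨ ((x : Fin 3), x) = (2, 2))
    (u : Vr →₀ ℕ) (n : ℕ) (h1 : 2 ≤ u (x, n))
    (IH : ∀ v : Vr →₀ ℕ, muM v < muM u →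
      Ideal.Quotient.mk (idealB 1) (monomial v 1) ∈ SPan) :
    Ideal.Quotient.mk (idealB 1) (monomial u 1) ∈ SPan := by
  have hle := le_of_double u (x, n) h1
  refine reduce_pair x x hxy u (u - _) n n (decomp_of_le u _ hle) ?_ IH
  intro i j hij hne
  have hne' : ¬(i = n ∧ j = n) := by
    rintro ⟨rfl, rfl⟩; exact hne rfl
  apply muM_lt
  · simp only [qdeg_add, qdeg_single]; omega
  · left
    constructor
    · intro c
      simp only [crossC_add, crossC_single]
      omega
    · simp only [phi_add, phi_single, crossM_single_single]
      omega

/-- `x_n x_{n+1}` forbidden, same letter. -/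
lemma pat_adj (x : Fin 3)
    (hxy : ((x : Fin 3), x) = (0, 0) ∨ ((x : Fin 3), x) = (0, 1) ∨ ((x : Fin 3), x) = (1, 1) ∨
      ((x : Fin 3), x) = (1, 2) ∨ ((x : Fin 3), x) = (2, 2))
    (u : Vr →₀ ℕ) (n : ℕ) (h1 : 1 ≤ u (x, n)) (h2 : 1 ≤ u (x, n + 1))
    (IH : ∀ v : Vr →₀ ℕ, muM v < muM u →
      Ideal.Quotient.mk (idealB 1) (monomial v 1) ∈ SPan) :
    Ideal.Quotient.mk (idealB 1) (monomial u 1) ∈ SPan := by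
  have hle := le_of_two u (x, n) (x, n + 1) (by simp) h1 h2
  refine reduce_pair x x hxy u (u - _) n (n + 1) (decomp_of_le u _ hle) ?_ IH
  intro i j hij hne
  have hne1 : ¬(i = n ∧ j = n + 1) := by
    rintro ⟨rfl, rfl⟩; exact hne rfl
  have hne2 : ¬(i = n + 1 ∧ j = n) := by
    rintro ⟨rfl, rfl⟩
    exact hne (by congr 1; exact add_comm _ _)
  apply muM_lt
  · simp only [qdeg_add, qdeg_single]; omega
  · left
    constructor
    · intro c
      simp only [crossC_add, crossC_single]
      omega
    · simp only [phi_add, phi_single, crossM_single_single]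
      omega

/-- `e_n h_n` forbidden. -/
lemma pat_eh_same (u : Vr →₀ ℕ) (n : ℕ) (h1 : 1 ≤ u (0, n)) (h2 : 1 ≤ u (1, n))
    (IH : ∀ v : Vr →₀ ℕ, muM v < muM u →
      Ideal.Quotient.mk (idealB 1) (monomial v 1) ∈ SPan) :
    Ideal.Quotient.mk (idealB 1) (monomial u 1) ∈ SPan := by
  have hle := le_of_two u (0, n) (1, n) (by simp) h1 h2
  refine reduce_pair 0 1 (by norm_num) u (u - _) n n (decomp_of_le u _ hle) ?_ IH
  intro i j hij hne
  have hne' : ¬(i = n ∧ j = n) := by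
    rintro ⟨rfl, rfl⟩; exact hne rfl
  apply muM_lt
  · simp only [qdeg_add, qdeg_single]; omega
  · left
    constructor
    · intro c
      simp only [crossC_add, crossC_single]
      omega
    · simp only [phi_add, phi_single, crossM_single_single]
      omega

/-- `e_{n+1} h_n` forbidden. -/
lemma pat_eh_swap (u : Vr →₀ ℕ) (n : ℕ) (h1 : 1 ≤ u (0, n + 1)) (h2 : 1 ≤ u (1, n))
    (IH : ∀ v : Vr →₀ ℕ, muM v < muM u →
      Ideal.Quotient.mk (idealB 1) (monomial v 1) ∈ SPan) :
    Ideal.Quotient.mk (idealB 1) (monomial u 1) ∈ SPan := by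
  have hle := le_of_two u (0, n + 1) (1, n) (by simp) h1 h2
  refine reduce_pair 0 1 (by norm_num) u (u - _) (n + 1) n (decomp_of_le u _ hle) ?_ IH
  intro i j hij hne
  apply muM_lt
  · simp only [qdeg_add, qdeg_single]; omega
  by_cases hswap : i = n ∧ j = n + 1
  · obtain ⟨rfl, rfl⟩ := hswap
    right
    refine ⟨fun c => by simp only [crossC_add, crossC_single]; omega,
      by simp only [phi_add, phi_single, crossM_single_single]; omega, Or.inl ?_⟩
    simp only [psi_add, psi_single]
    norm_num
    omega
  · have hne' : ¬(i = n + 1 ∧ j = n) := by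
      rintro ⟨rfl, rfl⟩; exact hne rfl
    left
    constructor
    · intro c
      simp only [crossC_add, crossC_single]
      omega
    · simp only [phi_add, phi_single, crossM_single_single]
      omega

/-- `h_n f_n` forbidden. -/
lemma pat_hf_same (u : Vr →₀ ℕ) (n : ℕ) (h1 : 1 ≤ u (1, n)) (h2 : 1 ≤ u (2, n))
    (IH : ∀ v : Vr →₀ ℕ, muM v < muM u →
      Ideal.Quotient.mk (idealB 1) (monomial v 1) ∈ SPan) :
    Ideal.Quotient.mk (idealB 1) (monomial u 1) ∈ SPan := by
  have hle := le_of_two u (1, n) (2, n) (by simp) h1 h2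
  refine reduce_pair 1 2 (by norm_num) u (u - _) n n (decomp_of_le u _ hle) ?_ IH
  intro i j hij hne
  have hne' : ¬(i = n ∧ j = n) := by
    rintro ⟨rfl, rfl⟩; exact hne rfl
  apply muM_lt
  · simp only [qdeg_add, qdeg_single]; omega
  · left
    constructor
    · intro c
      simp only [crossC_add, crossC_single]
      omega
    · simp only [phi_add, phi_single, crossM_single_single]
      omega

/-- `h_{n+1} f_n` forbidden. -/
lemma pat_hf_swap (u : Vr →₀ ℕ) (n : ℕ) (h1 : 1 ≤ u (1, n + 1)) (h2 : 1 ≤ u (2, n))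
    (IH : ∀ v : Vr →₀ ℕ, muM v < muM u →
      Ideal.Quotient.mk (idealB 1) (monomial v 1) ∈ SPan) :
    Ideal.Quotient.mk (idealB 1) (monomial u 1) ∈ SPan := by
  have hle := le_of_two u (1, n + 1) (2, n) (by simp) h1 h2
  refine reduce_pair 1 2 (by norm_num) u (u - _) (n + 1) n (decomp_of_le u _ hle) ?_ IH
  intro i j hij hne
  apply muM_lt
  · simp only [qdeg_add, qdeg_single]; omega
  by_cases hswap : i = n ∧ j = n + 1
  · obtain ⟨rfl, rfl⟩ := hswap
    right
    refine ⟨fun c => by simp only [crossC_add, crossC_single]; omega,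
      by simp only [phi_add, phi_single, crossM_single_single]; omega, Or.inl ?_⟩
    simp only [psi_add, psi_single]
    norm_num
  · have hne' : ¬(i = n + 1 ∧ j = n) := by
      rintro ⟨rfl, rfl⟩; exact hne rfl
    left
    constructor
    · intro c
      simp only [crossC_add, crossC_single]
      omega
    · simp only [phi_add, phi_single, crossM_single_single]
      omega

end Patterns
section Triple

/-- `single (0,i) 1 + single (1,j) 1 + single (2,l) 1`. -/
noncomputable def t3 (i j l : ℕ) : Vr →₀ ℕ :=
  Finsupp.single ((0 : Fin 3), i) 1 + Finsupp.single ((1 : Fin 3), j) 1 +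
    Finsupp.single ((2 : Fin 3), l) 1

lemma le_of_three (u : Vr →₀ ℕ) (n : ℕ)
    (h1 : 1 ≤ u (0, n + 2)) (h2 : 1 ≤ u (1, n)) (h3 : 1 ≤ u (2, n + 1)) :
    t3 (n + 2) n (n + 1) ≤ u := by
  rw [Finsupp.le_def]
  intro z
  unfold t3
  rw [Finsupp.add_apply, Finsupp.add_apply, Finsupp.single_apply, Finsupp.single_apply,
    Finsupp.single_apply]
  rcases z with ⟨zx, zn⟩
  by_cases e1 : ((0 : Fin 3), n + 2) = (zx, zn)
  · rw [if_pos e1, if_neg (by rw [← e1]; simp), if_neg (by rw [← e1]; simp)]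
    rw [← e1]
    omega
  · rw [if_neg e1]
    by_cases e2 : ((1 : Fin 3), n) = (zx, zn)
    · rw [if_pos e2, if_neg (by rw [← e2]; simp)]
      rw [← e2]
      omega
    · rw [if_neg e2]
      by_cases e3 : ((2 : Fin 3), n + 1) = (zx, zn)
      · rw [if_pos e3]
        rw [← e3]
        omega
      · rw [if_neg e3]; omega

lemma qdeg_t3 (i j l : ℕ) : qdegMon (t3 i j l) = i + j + l + 3 := by
  unfold t3
  rw [qdeg_add, qdeg_add, qdeg_single, qdeg_single, qdeg_single]
  ring

lemma crossC_t3 (i j l c : ℕ) : crossC (t3 i j l) c = min i c + min j c + min l c := by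
  unfold t3
  rw [crossC_add, crossC_add, crossC_single, crossC_single, crossC_single]
  ring

lemma phi_t3 (i j l : ℕ) :
    phiM (t3 i j l) = i + j + l + 2 * (min i j + min i l + min j l) := by
  unfold t3
  rw [phi_add, phi_add, crossM_add_left, phi_single, phi_single, phi_single,
    crossM_single_single, crossM_single_single, crossM_single_single]
  simp only [one_mul]
  rw [min_comm j i, min_comm l i, min_comm l j]
  ring

lemma psi_t3 (i j l : ℕ) : psiM (t3 i j l) = 2 * i + j := by
  unfold t3
  rw [psi_add, psi_add, psi_single, psi_single, psi_single]
  have c0 : ((0 : Fin 3) : ℕ) = 0 := rfl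
  have c1 : ((1 : Fin 3) : ℕ) = 1 := rfl
  have c2 : ((2 : Fin 3) : ℕ) = 2 := rfl
  norm_num [c0, c1, c2]

lemma psi2_t3 (i j l : ℕ) : psi2M (t3 i j l) = i := by
  unfold t3
  rw [psi2_add, psi2_add, psi2_single, psi2_single, psi2_single]
  norm_num
  exact fun h => absurd h (by decide)

/-- The triple pattern `h_n f_{n+1} e_{n+2}` (Lean indices). -/
lemma pat_triple (u : Vr →₀ ℕ) (n : ℕ)
    (h1 : 1 ≤ u (0, n + 2)) (h2 : 1 ≤ u (1, n)) (h3 : 1 ≤ u (2, n + 1))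
    (IH : ∀ v : Vr →₀ ℕ, muM v < muM u →
      Ideal.Quotient.mk (idealB 1) (monomial v 1) ∈ SPan) :
    Ideal.Quotient.mk (idealB 1) (monomial u 1) ∈ SPan := by
  set mkq := Ideal.Quotient.mk (idealB 1) with hmkq
  have hle := le_of_three u n h1 h2 h3
  set u₀ := u - t3 (n + 2) n (n + 1) with hu₀
  have hu : u = u₀ + t3 (n + 2) n (n + 1) := (tsub_add_cancel_of_le hle).symm
  set F : ℕ × ℕ → MvPolynomial Vr ℂ ⧸ idealB 1 := fun il =>
    mkq (monomial (u₀ + t3 il.1 (3 * n + 3 - il.1 - il.2) il.2) 1) with hF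
  -- the two ideal elements
  have hS1 : ∑ k ∈ Finset.range (2 * n + 2), ∑ p ∈ Finset.HasAntidiagonal.antidiagonal k,
      mkq (monomial (u₀ + t3 (3 * n + 3 - k) p.1 p.2) 1) = 0 := by
    have hexp : ∀ k, k ∈ Finset.range (2 * n + 2) → ∀ p : ℕ × ℕ, p ∈ Finset.HasAntidiagonal.antidiagonal k →
        (monomial (u₀ + t3 (3 * n + 3 - k) p.1 p.2) 1 : MvPolynomial Vr ℂ) =
          monomial u₀ 1 * (X (1, p.1) * X (2, p.2) * X (0, 3 * n + 3 - k)) := by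
      intro k _ p _
      rw [mon_mul_X3]
      congr 1
      unfold t3
      abel
    calc ∑ k ∈ Finset.range (2 * n + 2), ∑ p ∈ Finset.HasAntidiagonal.antidiagonal k,
          mkq (monomial (u₀ + t3 (3 * n + 3 - k) p.1 p.2) 1)
        = mkq (monomial u₀ 1 * ∑ k ∈ Finset.range (2 * n + 2),
            (∑ p ∈ Finset.HasAntidiagonal.antidiagonal k, X (1, p.1) * X (2, p.2)) * X (0, 3 * n + 3 - k)) := by
          rw [Finset.mul_sum, map_sum]
          refine Finset.sum_congr rfl fun k hk => ?_
          rw [Finset.sum_mul, Finset.mul_sum, map_sum]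
          exact Finset.sum_congr rfl fun p hp => by rw [hexp k hk p hp]
      _ = 0 := by
          rw [hmkq, Ideal.Quotient.eq_zero_iff_mem]
          refine Ideal.mul_mem_left _ _ (Submodule.sum_mem _ fun k _ => ?_)
          exact Ideal.mul_mem_right _ _ (rel_mem 1 2 k (by norm_num))
  have hS2 : ∑ l ∈ Finset.range (n + 1), ∑ p ∈ Finset.HasAntidiagonal.antidiagonal (3 * n + 3 - l),
      mkq (monomial (u₀ + t3 p.1 p.2 l) 1) = 0 := by
    calc ∑ l ∈ Finset.range (n + 1), ∑ p ∈ Finset.HasAntidiagonal.antidiagonal (3 * n + 3 - l),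
          mkq (monomial (u₀ + t3 p.1 p.2 l) 1)
        = mkq (monomial u₀ 1 * ∑ l ∈ Finset.range (n + 1),
            (∑ p ∈ Finset.HasAntidiagonal.antidiagonal (3 * n + 3 - l), X (0, p.1) * X (1, p.2)) * X (2, l)) := by
          rw [Finset.mul_sum, map_sum]
          refine Finset.sum_congr rfl fun l hl => ?_
          rw [Finset.sum_mul, Finset.mul_sum, map_sum]
          refine Finset.sum_congr rfl fun p hp => ?_
          rw [mon_mul_X3]
          rfl
      _ = 0 := by
          rw [hmkq, Ideal.Quotient.eq_zero_iff_mem]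
          refine Ideal.mul_mem_left _ _ (Submodule.sum_mem _ fun l _ => ?_)
          exact Ideal.mul_mem_right _ _ (rel_mem 0 1 _ (by norm_num))
  set Box : Finset (ℕ × ℕ) := Finset.range (3 * n + 4) ×ˢ Finset.range (3 * n + 4) with hBox
  set P1 := Box.filter (fun il => n + 2 ≤ il.1 ∧ il.1 + il.2 ≤ 3 * n + 3) with hP1
  set P2 := Box.filter (fun il => il.2 ≤ n ∧ il.1 + il.2 ≤ 3 * n + 3) with hP2
  have hSP1 : ∑ il ∈ P1, F il = 0 := by
    rw [← hS1]
    refine Eq.symm ((Finset.sum_sigma' (Finset.range (2 * n + 2)) (fun k => Finset.HasAntidiagonal.antidiagonal k)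
      (fun k p => mkq (monomial (u₀ + t3 (3 * n + 3 - k) p.1 p.2) 1))).trans ?_)
    refine Finset.sum_nbij' (fun a => (3 * n + 3 - a.1, a.2.2))
      (fun b => ⟨3 * n + 3 - b.1, (3 * n + 3 - b.1 - b.2, b.2)⟩) ?_ ?_ ?_ ?_ ?_
    · rintro ⟨k, p1, p2⟩ ha
      simp only [Finset.mem_sigma, Finset.mem_range, Finset.HasAntidiagonal.mem_antidiagonal] at ha
      simp only [hP1, hBox, Finset.mem_filter, Finset.mem_product, Finset.mem_range]
      omega
    · rintro ⟨b1, b2⟩ hb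
      simp only [hP1, hBox, Finset.mem_filter, Finset.mem_product, Finset.mem_range] at hb
      simp only [Finset.mem_sigma, Finset.mem_range, Finset.HasAntidiagonal.mem_antidiagonal]
      omega
    · rintro ⟨k, p1, p2⟩ ha
      simp only [Finset.mem_sigma, Finset.mem_range, Finset.HasAntidiagonal.mem_antidiagonal] at ha
      have e1 : 3 * n + 3 - (3 * n + 3 - k) = k := by omega
      have e2 : 3 * n + 3 - (3 * n + 3 - k) - p2 = p1 := by omega
      have e3 : k - p2 = p1 := by omega
      simp only [e1, e2, e3]
    · rintro ⟨b1, b2⟩ hb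
      simp only [hP1, hBox, Finset.mem_filter, Finset.mem_product, Finset.mem_range] at hb
      have e1 : 3 * n + 3 - (3 * n + 3 - b1) = b1 := by omega
      simp only [e1]
    · rintro ⟨k, p1, p2⟩ ha
      simp only [Finset.mem_sigma, Finset.mem_range, Finset.HasAntidiagonal.mem_antidiagonal] at ha
      simp only [hF]
      have e2 : 3 * n + 3 - (3 * n + 3 - k) - p2 = p1 := by omega
      rw [e2]
  have hSP2 : ∑ il ∈ P2, F il = 0 := by
    rw [← hS2]
    refine Eq.symm ((Finset.sum_sigma' (Finset.range (n + 1))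
      (fun l => Finset.HasAntidiagonal.antidiagonal (3 * n + 3 - l))
      (fun l p => mkq (monomial (u₀ + t3 p.1 p.2 l) 1))).trans ?_)
    refine Finset.sum_nbij' (fun a => (a.2.1, a.1))
      (fun b => ⟨b.2, (b.1, 3 * n + 3 - b.2 - b.1)⟩) ?_ ?_ ?_ ?_ ?_
    · rintro ⟨l, p1, p2⟩ ha
      simp only [Finset.mem_sigma, Finset.mem_range, Finset.HasAntidiagonal.mem_antidiagonal] at ha
      simp only [hP2, hBox, Finset.mem_filter, Finset.mem_product, Finset.mem_range]
      omega
    · rintro ⟨b1, b2⟩ hb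
      simp only [hP2, hBox, Finset.mem_filter, Finset.mem_product, Finset.mem_range] at hb
      simp only [Finset.mem_sigma, Finset.mem_range, Finset.HasAntidiagonal.mem_antidiagonal]
      omega
    · rintro ⟨l, p1, p2⟩ ha
      simp only [Finset.mem_sigma, Finset.mem_range, Finset.HasAntidiagonal.mem_antidiagonal] at ha
      have e2 : 3 * n + 3 - l - p1 = p2 := by omega
      simp only [e2]
    · rintro ⟨b1, b2⟩ hb
      simp only [hP2, hBox, Finset.mem_filter, Finset.mem_product, Finset.mem_range] at hb
      rfl
    · rintro ⟨l, p1, p2⟩ ha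
      simp only [Finset.mem_sigma, Finset.mem_range, Finset.HasAntidiagonal.mem_antidiagonal] at ha
      simp only [hF]
      have e2 : 3 * n + 3 - p1 - l = p2 := by omega
      rw [e2]
  have hsame : P1.filter (fun il => il.2 ≤ n) = P2.filter (fun il => n + 2 ≤ il.1) := by
    rw [hP1, hP2, Finset.filter_filter, Finset.filter_filter]
    apply Finset.filter_congr
    intro il _
    constructor
    · rintro ⟨⟨a, b⟩, c⟩; exact ⟨⟨c, b⟩, a⟩
    · rintro ⟨⟨a, b⟩, c⟩; exact ⟨⟨c, b⟩, a⟩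
  have hPQ : ∑ il ∈ P1.filter (fun il => ¬ il.2 ≤ n), F il =
      ∑ il ∈ P2.filter (fun il => ¬ n + 2 ≤ il.1), F il := by
    have e1 := (Finset.sum_filter_add_sum_filter_not P1 (fun il => il.2 ≤ n) F).trans hSP1
    have e2 := (Finset.sum_filter_add_sum_filter_not P2 (fun il => n + 2 ≤ il.1) F).trans hSP2
    rw [hsame] at e1
    exact add_left_cancel (e1.trans e2.symm)
  have hT : mkq (monomial u 1) = F (n + 2, n + 1) := by
    simp only [hF]
    have e : 3 * n + 3 - (n + 2) - (n + 1) = n := by omega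
    rw [e, ← hu]
  have hTm : (n + 2, n + 1) ∈ P1.filter (fun il => ¬ il.2 ≤ n) := by
    simp only [hP1, hBox, Finset.mem_filter, Finset.mem_product, Finset.mem_range]
    omega
  have hkey : F (n + 2, n + 1) =
      ∑ il ∈ P2.filter (fun il => ¬ n + 2 ≤ il.1), F il -
        ∑ il ∈ (P1.filter (fun il => ¬ il.2 ≤ n)).erase (n + 2, n + 1), F il := by
    rw [← hPQ]
    exact eq_sub_of_add_eq (Finset.add_sum_erase _ F hTm)
  rw [hT, hkey]
  apply Submodule.sub_mem
  · apply Submodule.sum_mem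
    intro il hil
    simp only [hP2, hBox, Finset.mem_filter, Finset.mem_product, Finset.mem_range] at hil
    obtain ⟨⟨⟨hi4, hl4⟩, hln, hsum⟩, hni⟩ := hil
    simp only [hF]
    apply IH
    rw [hu]
    by_cases hc : il.1 = n + 1 ∧ il.2 = n
    · obtain ⟨e1, e2⟩ := hc
      rw [e1, e2]
      have e3 : 3 * n + 3 - (n + 1) - n = n + 2 := by omega
      rw [e3]
      apply muM_lt
      · rw [qdeg_t3, qdeg_t3]; omega
      · exact Or.inr ⟨fun c => by rw [crossC_t3, crossC_t3]; omega,
          by rw [phi_t3, phi_t3]; omega,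
          Or.inr ⟨by rw [psi_t3, psi_t3]; omega, by rw [psi2_t3, psi2_t3]; omega⟩⟩
    · apply muM_lt
      · rw [qdeg_t3, qdeg_t3]; omega
      · refine Or.inl ⟨fun c => by rw [crossC_t3, crossC_t3]; omega, ?_⟩
        rw [phi_t3, phi_t3]
        omega
  · apply Submodule.sum_mem
    intro il hil
    rw [Finset.mem_erase] at hil
    obtain ⟨hne, hil⟩ := hil
    simp only [hP1, hBox, Finset.mem_filter, Finset.mem_product, Finset.mem_range] at hil
    obtain ⟨⟨⟨hi4, hl4⟩, hin, hsum⟩, hnl⟩ := hil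
    have hne' : ¬(il.1 = n + 2 ∧ il.2 = n + 1) := fun hh => hne (Prod.ext hh.1 hh.2)
    simp only [hF]
    apply IH
    rw [hu]
    apply muM_lt
    · rw [qdeg_t3, qdeg_t3]; omega
    · refine Or.inl ⟨fun c => by rw [crossC_t3, crossC_t3]; omega, ?_⟩
      rw [phi_t3, phi_t3]
      omega

end Triple
section Main

lemma prod_X_pow_eq (x : Fin 3) (g : ℕ →₀ ℕ) :
    (g.prod fun i m => (X ((x, i) : Vr) : MvPolynomial Vr ℂ) ^ m) =
      monomial (g.mapDomain (Prod.mk x)) 1 := by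
  have hinj : Function.Injective (Prod.mk x : ℕ → Vr) := fun a b h => (Prod.mk.injEq _ _ _ _ ▸ h).2
  rw [monomial_eq, map_one, one_mul, Finsupp.prod_mapDomain_index_inj hinj]

lemma mapDomain_letter_apply (x : Fin 3) (g : ℕ →₀ ℕ) (y : Fin 3) (m : ℕ) :
    (g.mapDomain (Prod.mk x)) (y, m) = if y = x then g m else 0 := by
  split
  · next h => subst h; exact Finsupp.mapDomain_apply (fun a b h => (Prod.mk.injEq _ _ _ _ ▸ h).2) g m
  · next h =>
      refine Finsupp.mapDomain_notin_range _ _ ?_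
      rintro ⟨a, ha⟩
      rw [Prod.mk.injEq] at ha
      exact h ha.1.symm

lemma ehf_eq (u : Vr →₀ ℕ) :
    ehfMonomial (u.curry 2) (u.curry 1) (u.curry 0) = monomial u 1 := by
  unfold ehfMonomial
  rw [prod_X_pow_eq, prod_X_pow_eq, prod_X_pow_eq, monomial_mul, monomial_mul]
  rw [one_mul, one_mul]
  have key : Finsupp.mapDomain (Prod.mk 2) (u.curry 2) + Finsupp.mapDomain (Prod.mk 1) (u.curry 1)
      + Finsupp.mapDomain (Prod.mk 0) (u.curry 0) = u := by
    ext v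
    rcases v with ⟨y, m⟩
    rw [Finsupp.add_apply, Finsupp.add_apply, mapDomain_letter_apply, mapDomain_letter_apply,
      mapDomain_letter_apply, Finsupp.curry_apply, Finsupp.curry_apply, Finsupp.curry_apply]
    fin_cases y <;> simp
  rw [key]

set_option maxHeartbeats 2000000 in
lemma main_mem (u : Vr →₀ ℕ) :
    Ideal.Quotient.mk (idealB 1) (monomial u 1) ∈ SPan := by
  suffices H : ∀ m : ℕ, ∀ u : Vr →₀ ℕ, muM u < m →
      Ideal.Quotient.mk (idealB 1) (monomial u 1) ∈ SPan from
    H (muM u + 1) u (Nat.lt_succ_self _)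
  intro m
  induction m with
  | zero => exact fun u h => absurd h (Nat.not_lt_zero _)
  | succ m IHm =>
    intro u hu
    have IH : ∀ v : Vr →₀ ℕ, muM v < muM u →
        Ideal.Quotient.mk (idealB 1) (monomial v 1) ∈ SPan :=
      fun v hv => IHm v (by omega)
    by_cases hehf : IsEhf' (u.curry 2) (u.curry 1) (u.curry 0)
    · exact Submodule.subset_span ⟨u.curry 2, u.curry 1, u.curry 0, hehf,
        congrArg _ (ehf_eq u).symm⟩
    · unfold IsEhf' at hehf
      rw [not_forall] at hehf
      obtain ⟨i, hi⟩ := hehf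
      simp only [Finsupp.curry_apply] at hi
      have h5 : ¬(u (2, i) + u (2, i + 1) + u (1, i + 1) ≤ 1) ∨
          ¬(u (2, i) + u (1, i) + u (1, i + 1) ≤ 1) ∨
          ¬(u (1, i) + u (1, i + 1) + u (0, i + 1) ≤ 1) ∨
          ¬(u (1, i) + u (0, i) + u (0, i + 1) ≤ 1) ∨
          ¬(u (1, i) + u (2, i + 1) + u (0, i + 2) ≤ 2) := by
        by_contra hcon
        push_neg at hcon
        exact hi ⟨hcon.1, hcon.2.1, hcon.2.2.1, hcon.2.2.2.1, hcon.2.2.2.2⟩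
      rcases h5 with h5 | h5 | h5 | h5 | h5
      · have hd : 2 ≤ u (2, i) ∨ 2 ≤ u (2, i + 1) ∨ 2 ≤ u (1, i + 1) ∨
            (1 ≤ u (2, i) ∧ 1 ≤ u (2, i + 1)) ∨ (1 ≤ u (1, i + 1) ∧ 1 ≤ u (2, i)) ∨
            (1 ≤ u (1, i + 1) ∧ 1 ≤ u (2, i + 1)) := by omega
        rcases hd with h | h | h | h | h | h
        · exact pat_same 2 (by norm_num) u i h IH
        · exact pat_same 2 (by norm_num) u (i + 1) h IH
        · exact pat_same 1 (by norm_num) u (i + 1) h IH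
        · exact pat_adj 2 (by norm_num) u i h.1 h.2 IH
        · exact pat_hf_swap u i h.1 h.2 IH
        · exact pat_hf_same u (i + 1) h.1 h.2 IH
      · have hd : 2 ≤ u (2, i) ∨ 2 ≤ u (1, i) ∨ 2 ≤ u (1, i + 1) ∨
            (1 ≤ u (1, i) ∧ 1 ≤ u (2, i)) ∨ (1 ≤ u (1, i + 1) ∧ 1 ≤ u (2, i)) ∨
            (1 ≤ u (1, i) ∧ 1 ≤ u (1, i + 1)) := by omega
        rcases hd with h | h | h | h | h | h
        · exact pat_same 2 (by norm_num) u i h IH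
        · exact pat_same 1 (by norm_num) u i h IH
        · exact pat_same 1 (by norm_num) u (i + 1) h IH
        · exact pat_hf_same u i h.1 h.2 IH
        · exact pat_hf_swap u i h.1 h.2 IH
        · exact pat_adj 1 (by norm_num) u i h.1 h.2 IH
      · have hd : 2 ≤ u (1, i) ∨ 2 ≤ u (1, i + 1) ∨ 2 ≤ u (0, i + 1) ∨
            (1 ≤ u (1, i) ∧ 1 ≤ u (1, i + 1)) ∨ (1 ≤ u (0, i + 1) ∧ 1 ≤ u (1, i)) ∨
            (1 ≤ u (0, i + 1) ∧ 1 ≤ u (1, i + 1)) := by omega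
        rcases hd with h | h | h | h | h | h
        · exact pat_same 1 (by norm_num) u i h IH
        · exact pat_same 1 (by norm_num) u (i + 1) h IH
        · exact pat_same 0 (by norm_num) u (i + 1) h IH
        · exact pat_adj 1 (by norm_num) u i h.1 h.2 IH
        · exact pat_eh_swap u i h.1 h.2 IH
        · exact pat_eh_same u (i + 1) h.1 h.2 IH
      · have hd : 2 ≤ u (1, i) ∨ 2 ≤ u (0, i) ∨ 2 ≤ u (0, i + 1) ∨
            (1 ≤ u (0, i) ∧ 1 ≤ u (1, i)) ∨ (1 ≤ u (0, i + 1) ∧ 1 ≤ u (1, i)) ∨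
            (1 ≤ u (0, i) ∧ 1 ≤ u (0, i + 1)) := by omega
        rcases hd with h | h | h | h | h | h
        · exact pat_same 1 (by norm_num) u i h IH
        · exact pat_same 0 (by norm_num) u i h IH
        · exact pat_same 0 (by norm_num) u (i + 1) h IH
        · exact pat_eh_same u i h.1 h.2 IH
        · exact pat_eh_swap u i h.1 h.2 IH
        · exact pat_adj 0 (by norm_num) u i h.1 h.2 IH
      · have hd : 2 ≤ u (1, i) ∨ 2 ≤ u (2, i + 1) ∨ 2 ≤ u (0, i + 2) ∨
            (1 ≤ u (1, i) ∧ 1 ≤ u (2, i + 1) ∧ 1 ≤ u (0, i + 2)) := by omega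
        rcases hd with h | h | h | h
        · exact pat_same 1 (by norm_num) u i h IH
        · exact pat_same 2 (by norm_num) u (i + 1) h IH
        · exact pat_same 0 (by norm_num) u (i + 2) h IH
        · exact pat_triple u i h.2.2 h.1 h.2.1 IH

end Main
/-- The images in `B_1` of the monomials `∏ f̃_i^{a_i} h̃_i^{b_i} ẽ_i^{c_i}`,
where `(a, b, c)` runs over all ehf'-triples, span `B_1` over `ℂ`. -/
theorem stmt7 :
    Submodule.span ℂ
      { q : MvPolynomial Vr ℂ ⧸ idealB 1 |
        ∃ a b c : ℕ →₀ ℕ, IsEhf' a b c ∧ q = Ideal.Quotient.mk (idealB 1) (ehfMonomial a b c) } =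
      ⊤ := by
  rw [eq_top_iff]
  rintro q -
  obtain ⟨p, rfl⟩ := Ideal.Quotient.mk_surjective q
  induction p using MvPolynomial.induction_on' with
  | monomial u a =>
    have e1 : (monomial u a : MvPolynomial Vr ℂ) = a • monomial u 1 := by
      rw [smul_monomial, smul_eq_mul, mul_one]
    have e2 : Ideal.Quotient.mk (idealB 1) (a • monomial u 1) =
        a • Ideal.Quotient.mk (idealB 1) (monomial u 1) := by
      rw [← Ideal.Quotient.mkₐ_eq_mk ℂ, map_smul]
    rw [e1, e2]
    exact Submodule.smul_mem _ _ (main_mem u)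
  | add p q hp hq =>
    rw [map_add]
    exact Submodule.add_mem _ hp hq
end

section
/- For every integer l, the following identity holds in the ring ℤ[[q]] of formal power series: ( ∑_{(n⁺, n⁰, n⁻) ∈ ℕ³, n⁺ − n⁻ = l} q^{(n⁺)² + (n⁰)² + (n⁻)² + n⁺n⁰ + n⁰n⁻} / ((q)_{n⁺}(q)_{n⁰}(q)_{n⁻}) ) · ∏_{i=1}^∞ (1 − q^i) = q^{l²}. Here the infinite sum is coefficientwise well defined (summable in the q-adic topology) since the exponents (n⁺)² + (n⁰)² + (n⁻)² + n⁺n⁰ + n⁰n⁻ tend to infinity along the index set, and the infinite product ∏_{i=1}^∞ (1 − q^i) is a well-defined element of ℤ[[q]]. -/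
/-- The summand `q^{(n⁺)² + (n⁰)² + (n⁻)² + n⁺n⁰ + n⁰n⁻} / ((q)_{n⁺} (q)_{n⁰} (q)_{n⁻})`. -/
noncomputable def fermTerm (n : ℕ × ℕ × ℕ) : PowerSeries ℤ :=
  PowerSeries.X ^ (n.1 ^ 2 + n.2.1 ^ 2 + n.2.2 ^ 2 + n.1 * n.2.1 + n.2.1 * n.2.2) *
    (qPochInv n.1 * qPochInv n.2.1 * qPochInv n.2.2)

open PowerSeries Finset


lemma constCoeff_qPoch (n : ℕ) : constantCoeff (qPoch n) = 1 := by
  unfold qPoch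
  rw [map_prod]
  apply Finset.prod_eq_one
  intro i _
  simp [zero_pow]

lemma qPoch_mul_inv (n : ℕ) : qPoch n * qPochInv n = 1 :=
  PowerSeries.mul_invOfUnit _ 1 (by simpa using constCoeff_qPoch n)

lemma inv_mul_qPoch (n : ℕ) : qPochInv n * qPoch n = 1 := by
  rw [mul_comm]; exact qPoch_mul_inv n

lemma qPoch_zero : qPoch 0 = 1 := by simp [qPoch]

lemma qPochInv_zero : qPochInv 0 = 1 := by
  have := qPoch_mul_inv 0
  rwa [qPoch_zero, one_mul] at this

lemma qPoch_succ (n : ℕ) : qPoch (n + 1) = qPoch n * (1 - X ^ (n + 1)) := by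
  unfold qPoch; rw [Finset.prod_range_succ]

lemma cancel_qPoch {m : ℕ} {x y : PowerSeries ℤ} (h : x * qPoch m = y * qPoch m) : x = y := by
  have h2 := congrArg (· * qPochInv m) h
  simpa [mul_assoc, qPoch_mul_inv] using h2

lemma inv_mul_qPoch_succ (m : ℕ) : qPochInv m * qPoch (m + 1) = 1 - X ^ (m + 1) := by
  rw [qPoch_succ, ← mul_assoc, inv_mul_qPoch, one_mul]

lemma qPochInv_rec (n : ℕ) : qPochInv n = (1 - X ^ (n + 1)) * qPochInv (n + 1) := by
  apply cancel_qPoch (m := n + 1)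
  rw [mul_assoc, inv_mul_qPoch, mul_one, ← inv_mul_qPoch_succ, mul_comm]

noncomputable def gb (n t : ℕ) : PowerSeries ℤ :=
  if t ≤ n then qPoch n * (qPochInv t * qPochInv (n - t)) else 0

lemma gb_zero (n : ℕ) : gb n 0 = 1 := by
  unfold gb
  rw [if_pos (Nat.zero_le n)]
  simp [qPochInv_zero, qPoch_mul_inv]

lemma gb_diag (n : ℕ) : gb n n = 1 := by
  unfold gb
  rw [if_pos le_rfl]
  simp [qPochInv_zero]
  exact qPoch_mul_inv n

lemma gb_of_gt {n t : ℕ} (h : n < t) : gb n t = 0 := by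
  unfold gb; rw [if_neg (by omega)]

lemma gb_pascal (n t : ℕ) : gb (n + 1) (t + 1) = gb n (t + 1) + X ^ (n - t) * gb n t := by
  rcases lt_trichotomy t n with h | rfl | h
  · obtain ⟨m, rfl⟩ : ∃ m, n = t + 1 + m := ⟨n - t - 1, by omega⟩
    unfold gb
    rw [if_pos (by omega), if_pos (by omega), if_pos (by omega)]
    have e1 : t + 1 + m + 1 - (t + 1) = m + 1 := by omega
    have e2 : t + 1 + m - (t + 1) = m := by omega
    have e3 : t + 1 + m - t = m + 1 := by omega
    have e4 : t + 1 + m + 1 = (t + 1 + m) + 1 := by omega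
    rw [e1, e2, e3]
    apply cancel_qPoch (m := t + 1)
    apply cancel_qPoch (m := m + 1)
    have hL : qPoch (t + 1 + m + 1) * (qPochInv (t + 1) * qPochInv (m + 1)) * qPoch (t + 1) * qPoch (m + 1)
        = qPoch (t + 1 + m + 1) := by
      have : qPoch (t + 1 + m + 1) * (qPochInv (t + 1) * qPochInv (m + 1)) * qPoch (t + 1) * qPoch (m + 1)
          = qPoch (t + 1 + m + 1) * ((qPochInv (t + 1) * qPoch (t + 1)) * (qPochInv (m + 1) * qPoch (m + 1))) := by
        ring
      rw [this, inv_mul_qPoch, inv_mul_qPoch]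
      simp
    rw [hL]
    have hR1 : qPoch (t + 1 + m) * (qPochInv (t + 1) * qPochInv m) * qPoch (t + 1) * qPoch (m + 1)
        = qPoch (t + 1 + m) * (1 - X ^ (m + 1)) := by
      have : qPoch (t + 1 + m) * (qPochInv (t + 1) * qPochInv m) * qPoch (t + 1) * qPoch (m + 1)
          = qPoch (t + 1 + m) * ((qPochInv (t + 1) * qPoch (t + 1)) * (qPochInv m * qPoch (m + 1))) := by
        ring
      rw [this, inv_mul_qPoch, inv_mul_qPoch_succ, one_mul]
    have hR2 : X ^ (m + 1) * (qPoch (t + 1 + m) * (qPochInv t * qPochInv (m + 1))) * qPoch (t + 1) * qPoch (m + 1)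
        = X ^ (m + 1) * (qPoch (t + 1 + m) * (1 - X ^ (t + 1))) := by
      have : X ^ (m + 1) * (qPoch (t + 1 + m) * (qPochInv t * qPochInv (m + 1))) * qPoch (t + 1) * qPoch (m + 1)
          = X ^ (m + 1) * (qPoch (t + 1 + m) * ((qPochInv t * qPoch (t + 1)) * (qPochInv (m + 1) * qPoch (m + 1)))) := by
        ring
      rw [this, inv_mul_qPoch, inv_mul_qPoch_succ, mul_one]
    rw [add_mul, add_mul, hR1, hR2, e4, qPoch_succ]
    have : t + 1 + m + 1 = (m + 1) + (t + 1) := by omega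
    rw [this, pow_add]
    ring
  · rw [gb_diag, gb_of_gt (Nat.lt_succ_self t), gb_diag]
    simp
  · rw [gb_of_gt (by omega), gb_of_gt (by omega), gb_of_gt h]
    simp
lemma keyL : ∀ n k : ℕ, ∑ t ∈ range (n + 1), X ^ (t * (t + k)) * gb n t * qPochInv (t + k)
    = qPochInv (n + k) := by
  intro n
  induction n with
  | zero =>
    intro k
    simp [gb_zero]
  | succ n ih =>
    intro k
    rw [Finset.sum_range_succ']
    have hsplit : ∀ t ∈ range (n + 1),
        X ^ ((t + 1) * (t + 1 + k)) * gb (n + 1) (t + 1) * qPochInv (t + 1 + k)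
        = X ^ ((t + 1) * (t + 1 + k)) * gb n (t + 1) * qPochInv (t + 1 + k)
          + X ^ (n + k + 1) * (X ^ (t * (t + (k + 1))) * gb n t * qPochInv (t + (k + 1))) := by
      intro t ht
      rw [mem_range] at ht
      rw [gb_pascal]
      have he : (t + 1) * (t + (k + 1)) + (n - t) = (n + k + 1) + t * (t + (k + 1)) := by
        obtain ⟨m, rfl⟩ : ∃ m, n = t + m := ⟨n - t, by omega⟩
        have : t + m - t = m := by omega
        rw [this]
        ring
      have : X ^ ((t + 1) * (t + 1 + k)) * (X ^ (n - t) * gb n t) * qPochInv (t + 1 + k)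
          = X ^ (n + k + 1) * (X ^ (t * (t + (k + 1))) * gb n t * qPochInv (t + (k + 1))) := by
        rw [show t + 1 + k = t + (k + 1) by ring]
        rw [← mul_assoc, ← pow_add, he, pow_add]
        ring
      rw [mul_add, add_mul, this]
    rw [Finset.sum_congr rfl hsplit, Finset.sum_add_distrib, ← Finset.mul_sum, ih (k + 1)]
    have hfirst : (∑ t ∈ range (n + 1), X ^ ((t + 1) * (t + 1 + k)) * gb n (t + 1) * qPochInv (t + 1 + k))
        + X ^ (0 * (0 + k)) * gb (n + 1) 0 * qPochInv (0 + k)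
        = ∑ t ∈ range (n + 2), X ^ (t * (t + k)) * gb n t * qPochInv (t + k) := by
      rw [Finset.sum_range_succ' (fun t => X ^ (t * (t + k)) * gb n t * qPochInv (t + k)) (n + 1)]
      simp [gb_zero]
    rw [add_right_comm, hfirst, Finset.sum_range_succ, gb_of_gt (Nat.lt_succ_self n), ih k]
    rw [qPochInv_rec (n + k)]
    have h1 : n + 1 + k = n + k + 1 := by ring
    have h2 : n + (k + 1) = n + k + 1 := by ring
    rw [h1, h2]
    ring
lemma keyA2 (s k : ℕ) :
    ∑ t ∈ range (s + 1), X ^ (t * (t + k)) * (qPochInv t * qPochInv (t + k) * qPochInv (s - t))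
      = qPochInv s * qPochInv (s + k) := by
  have hL := keyL s k
  have : ∀ t ∈ range (s + 1),
      X ^ (t * (t + k)) * (qPochInv t * qPochInv (t + k) * qPochInv (s - t))
      = qPochInv s * (X ^ (t * (t + k)) * gb s t * qPochInv (t + k)) := by
    intro t ht
    rw [mem_range] at ht
    unfold gb
    rw [if_pos (by omega)]
    have : qPochInv s * (X ^ (t * (t + k)) * (qPoch s * (qPochInv t * qPochInv (s - t))) * qPochInv (t + k))
        = (qPochInv s * qPoch s) * (X ^ (t * (t + k)) * (qPochInv t * qPochInv (t + k) * qPochInv (s - t))) := by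
      ring
    rw [this, inv_mul_qPoch, one_mul]
  rw [Finset.sum_congr rfl this, ← Finset.mul_sum, hL]

lemma qPoch_add (a b : ℕ) :
    qPoch (a + b) = qPoch a * ∏ i ∈ range b, (1 - X ^ (a + i + 1)) := by
  unfold qPoch
  rw [Finset.prod_range_add]

lemma X_pow_dvd_prod_sub_one (a b : ℕ) :
    (X : PowerSeries ℤ) ^ (a + 1) ∣ (∏ i ∈ range b, (1 - X ^ (a + i + 1))) - 1 := by
  induction b with
  | zero => simp
  | succ b ih =>
    rw [Finset.prod_range_succ]
    have : (∏ i ∈ range b, ((1 : PowerSeries ℤ) - X ^ (a + i + 1))) * (1 - X ^ (a + b + 1)) - 1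
        = ((∏ i ∈ range b, ((1 : PowerSeries ℤ) - X ^ (a + i + 1))) - 1)
          - (∏ i ∈ range b, ((1 : PowerSeries ℤ) - X ^ (a + i + 1))) * X ^ (a + b + 1) := by
      ring
    rw [this]
    apply dvd_sub ih
    apply Dvd.dvd.mul_left
    exact pow_dvd_pow _ (by omega)

lemma inv_mul_qPoch_add (a b : ℕ) :
    qPochInv a * qPoch (a + b) = ∏ i ∈ range b, (1 - X ^ (a + i + 1)) := by
  rw [qPoch_add, ← mul_assoc, inv_mul_qPoch, one_mul]

lemma X_pow_dvd_inv_mul_qPoch_sub_one {a M : ℕ} (h : a ≤ M) :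
    (X : PowerSeries ℤ) ^ (a + 1) ∣ qPochInv a * qPoch M - 1 := by
  obtain ⟨b, rfl⟩ : ∃ b, M = a + b := ⟨M - a, by omega⟩
  rw [inv_mul_qPoch_add]
  exact X_pow_dvd_prod_sub_one a b

lemma stepB (n k M : ℕ) (hM : n + k ≤ M) :
    (X : PowerSeries ℤ) ^ (n + 1) ∣
      (∑ t ∈ range (n + 1), X ^ (t * (t + k)) * (qPochInv t * qPochInv (t + k))) * qPoch M - 1 := by
  have hE : (∑ t ∈ range (n + 1), X ^ (t * (t + k)) * gb n t * qPochInv (t + k)) = qPochInv (n + k) :=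
    keyL n k
  have key : (∑ t ∈ range (n + 1), X ^ (t * (t + k)) * (qPochInv t * qPochInv (t + k))) * qPoch M - 1
      = (∑ t ∈ range (n + 1),
          (X ^ (t * (t + k)) * (qPochInv t * qPochInv (t + k))
            - X ^ (t * (t + k)) * gb n t * qPochInv (t + k))) * qPoch M
        + (qPochInv (n + k) * qPoch M - 1) := by
    rw [Finset.sum_sub_distrib, hE]
    ring
  rw [key]
  apply dvd_add
  · apply Dvd.dvd.mul_right
    apply Finset.dvd_sum
    intro t ht
    rw [mem_range] at ht
    rcases Nat.eq_zero_or_pos t with rfl | htpos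
    · rw [gb_zero]
      simp [qPochInv_zero]
    · obtain ⟨m, rfl⟩ : ∃ m, n = t + m := ⟨n - t, by omega⟩
      unfold gb
      rw [if_pos (by omega), show t + m - t = m by omega]
      have : X ^ (t * (t + k)) * (qPochInv t * qPochInv (t + k))
          - X ^ (t * (t + k)) * (qPoch (t + m) * (qPochInv t * qPochInv m)) * qPochInv (t + k)
          = (X ^ (t * (t + k)) * (qPochInv t * qPochInv (t + k)))
            * (1 - qPochInv m * qPoch (m + t)) := by
        rw [show m + t = t + m by ring]
        ring
      rw [this]
      have hdvd : (X : PowerSeries ℤ) ^ (m + 1) ∣ 1 - qPochInv m * qPoch (m + t) := by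
        have h0 := X_pow_dvd_inv_mul_qPoch_sub_one (a := m) (M := m + t) (by omega)
        have h1 := dvd_neg.mpr h0
        rwa [neg_sub] at h1
      have hXt : (X : PowerSeries ℤ) ^ t ∣ X ^ (t * (t + k)) * (qPochInv t * qPochInv (t + k)) := by
        apply Dvd.dvd.mul_right
        exact pow_dvd_pow _ (Nat.le_mul_of_pos_right t (by omega))
      have := mul_dvd_mul hXt hdvd
      rw [← pow_add] at this
      exact dvd_trans (pow_dvd_pow _ (by omega)) this
  · calc (X : PowerSeries ℤ) ^ (n + 1) ∣ X ^ (n + k + 1) := pow_dvd_pow _ (by omega)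
      _ ∣ qPochInv (n + k) * qPoch M - 1 := X_pow_dvd_inv_mul_qPoch_sub_one (by omega)

lemma qPoch_coeff_stable {d m M : ℕ} (h1 : d ≤ m) (h2 : m ≤ M) :
    (PowerSeries.coeff d) (qPoch M) = (PowerSeries.coeff d) (qPoch m) := by
  obtain ⟨b, rfl⟩ : ∃ b, M = m + b := ⟨M - m, by omega⟩
  have : qPoch (m + b) - qPoch m = qPoch m * ((∏ i ∈ range b, (1 - X ^ (m + i + 1))) - 1) := by
    rw [qPoch_add]; ring
  have hdvd : (X : PowerSeries ℤ) ^ (m + 1) ∣ qPoch (m + b) - qPoch m := by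
    rw [this]
    exact Dvd.dvd.mul_left (X_pow_dvd_prod_sub_one m b) _
  have := PowerSeries.X_pow_dvd_iff.mp hdvd d (by omega)
  rw [map_sub, sub_eq_zero] at this
  exact this

lemma coeff_eq_of_sub_dvd {A B : PowerSeries ℤ} {d : ℕ}
    (h : (X : PowerSeries ℤ) ^ (d + 1) ∣ A - B) : (PowerSeries.coeff d) A = (PowerSeries.coeff d) B := by
  have := PowerSeries.X_pow_dvd_iff.mp h d (by omega)
  rw [map_sub, sub_eq_zero] at this
  exact this
lemma fermTerm_swap (a b c : ℕ) : fermTerm (a, b, c) = fermTerm (c, b, a) := by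
  unfold fermTerm
  dsimp only
  rw [show a ^ 2 + b ^ 2 + c ^ 2 + a * b + b * c = c ^ 2 + b ^ 2 + a ^ 2 + c * b + b * a by ring]
  ring

lemma fermTerm_param (k s c : ℕ) (h : c ≤ s) :
    fermTerm (c + k, s - c, c)
      = X ^ (k ^ 2 + s * (s + k))
        * (X ^ (c * (c + k)) * (qPochInv c * qPochInv (c + k) * qPochInv (s - c))) := by
  obtain ⟨b, rfl⟩ : ∃ b, s = c + b := ⟨s - c, by omega⟩
  unfold fermTerm
  dsimp only
  rw [show c + b - c = b by omega]
  rw [show (c + k) ^ 2 + b ^ 2 + c ^ 2 + (c + k) * b + b * c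
      = (k ^ 2 + (c + b) * ((c + b) + k)) + c * (c + k) by ring]
  rw [pow_add, pow_add]
  ring

lemma fermInnerSum (k s : ℕ) :
    ∑ c ∈ range (s + 1), fermTerm (c + k, s - c, c)
      = X ^ (k ^ 2 + s * (s + k)) * (qPochInv s * qPochInv (s + k)) := by
  have : ∀ c ∈ range (s + 1), fermTerm (c + k, s - c, c)
      = X ^ (k ^ 2 + s * (s + k))
        * (X ^ (c * (c + k)) * (qPochInv c * qPochInv (c + k) * qPochInv (s - c))) := by
    intro c hc
    rw [mem_range] at hc
    exact fermTerm_param k s c (by omega)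
  rw [Finset.sum_congr rfl this, ← Finset.mul_sum, keyA2]

lemma coreC (k d M : ℕ) (hM : d + k ≤ M) :
    (X : PowerSeries ℤ) ^ (d + 1) ∣
      (∑ s ∈ range (d + 1), ∑ c ∈ range (s + 1), fermTerm (c + k, s - c, c)) * qPoch M
        - X ^ (k ^ 2) := by
  have h1 : ∀ s ∈ range (d + 1), ∑ c ∈ range (s + 1), fermTerm (c + k, s - c, c)
      = X ^ (k ^ 2) * (X ^ (s * (s + k)) * (qPochInv s * qPochInv (s + k))) := by
    intro s _
    rw [fermInnerSum, pow_add, mul_assoc]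
  rw [Finset.sum_congr rfl h1, ← Finset.mul_sum]
  have : X ^ (k ^ 2) * (∑ s ∈ range (d + 1), X ^ (s * (s + k)) * (qPochInv s * qPochInv (s + k))) * qPoch M
      - X ^ (k ^ 2)
      = X ^ (k ^ 2) *
        ((∑ s ∈ range (d + 1), X ^ (s * (s + k)) * (qPochInv s * qPochInv (s + k))) * qPoch M - 1) := by
    ring
  rw [this]
  exact Dvd.dvd.mul_left (stepB d k M hM) _

lemma coeff_fermTerm_zero {i : ℕ} {n : ℕ × ℕ × ℕ}
    (h : i < n.1 ^ 2 + n.2.1 ^ 2 + n.2.2 ^ 2 + n.1 * n.2.1 + n.2.1 * n.2.2) :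
    (PowerSeries.coeff i) (fermTerm n) = 0 := by
  have : (X : PowerSeries ℤ) ^ (n.1 ^ 2 + n.2.1 ^ 2 + n.2.2 ^ 2 + n.1 * n.2.1 + n.2.1 * n.2.2)
      ∣ fermTerm n := dvd_mul_right _ _
  exact PowerSeries.X_pow_dvd_iff.mp this i h
lemma assembleS (l : ℤ) (S : PowerSeries ℤ)
    (hS : ∀ d : ℕ, (PowerSeries.coeff d) S =
      ∑ᶠ (n : ℕ × ℕ × ℕ) (_ : (n.1 : ℤ) - n.2.2 = l), (PowerSeries.coeff d) (fermTerm n))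
    (d : ℕ) (ψ : (Σ _ : ℕ, ℕ) → ℕ × ℕ × ℕ)
    (hcond : ∀ s c : ℕ, c ≤ s → ((ψ ⟨s, c⟩).1 : ℤ) - (ψ ⟨s, c⟩).2.2 = l)
    (hinj : ∀ s c s' c' : ℕ, c ≤ s → c' ≤ s' → ψ ⟨s, c⟩ = ψ ⟨s', c'⟩ → s = s' ∧ c = c')
    (hsupp : ∀ n : ℕ × ℕ × ℕ, ((n.1 : ℤ) - n.2.2 = l) → ∃ s c : ℕ, c ≤ s ∧
      s ≤ n.1 ^ 2 + n.2.1 ^ 2 + n.2.2 ^ 2 + n.1 * n.2.1 + n.2.1 * n.2.2 ∧ ψ ⟨s, c⟩ = n) :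
    (X : PowerSeries ℤ) ^ (d + 1) ∣
      S - ∑ p ∈ (range (d + 1)).sigma (fun s => range (s + 1)), fermTerm (ψ p) := by
  classical
  rw [PowerSeries.X_pow_dvd_iff]
  intro i hi
  rw [map_sub, sub_eq_zero, hS i, map_sum]
  set E := (range (d + 1)).sigma (fun s => range (s + 1)) with hE
  set F : ℕ × ℕ × ℕ → ℤ :=
    fun n => if (n.1 : ℤ) - n.2.2 = l then (PowerSeries.coeff i) (fermTerm n) else 0 with hF
  have h1 : ∀ n : ℕ × ℕ × ℕ,
      (∑ᶠ (_ : (n.1 : ℤ) - n.2.2 = l), (PowerSeries.coeff i) (fermTerm n)) = F n :=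
    fun n => finsum_eq_if
  rw [finsum_congr h1]
  have hsub : Function.support F ⊆ ↑(E.image ψ) := by
    intro n hn
    have hFn : F n ≠ 0 := hn
    have hcondn : (n.1 : ℤ) - n.2.2 = l := by
      by_contra hc
      exact hFn (if_neg hc)
    have hcoeff : (PowerSeries.coeff i) (fermTerm n) ≠ 0 := by
      rw [hF] at hFn
      simpa [if_pos hcondn] using hFn
    have hQ : n.1 ^ 2 + n.2.1 ^ 2 + n.2.2 ^ 2 + n.1 * n.2.1 + n.2.1 * n.2.2 ≤ i := by
      by_contra hq
      exact hcoeff (coeff_fermTerm_zero (by omega))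
    obtain ⟨s, c, hcs, hsQ, hpsi⟩ := hsupp n hcondn
    have hmem : (⟨s, c⟩ : Σ _ : ℕ, ℕ) ∈ E := by
      simp only [hE, Finset.mem_sigma, Finset.mem_range]
      omega
    simp only [Finset.coe_image, Set.mem_image, Finset.mem_coe]
    exact ⟨⟨s, c⟩, hmem, hpsi⟩
  rw [finsum_eq_finset_sum_of_support_subset F hsub]
  have hinjE : ∀ x ∈ E, ∀ y ∈ E, ψ x = ψ y → x = y := by
    rintro ⟨s, c⟩ hx ⟨s', c'⟩ hy hxy
    simp only [hE, Finset.mem_sigma, Finset.mem_range] at hx hy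
    obtain ⟨rfl, rfl⟩ := hinj s c s' c' (by omega) (by omega) hxy
    rfl
  rw [Finset.sum_image hinjE]
  apply Finset.sum_congr rfl
  rintro ⟨s, c⟩ hp
  simp only [hE, Finset.mem_sigma, Finset.mem_range] at hp
  rw [hF]
  simp only
  rw [if_pos (hcond s c (by omega))]

/-- For every `l ∈ ℤ`,
`(∑_{n⁺ - n⁻ = l} q^{(n⁺)²+(n⁰)²+(n⁻)²+n⁺n⁰+n⁰n⁻}/((q)_{n⁺}(q)_{n⁰}(q)_{n⁻})) · ∏_{i≥1}(1-q^i) = q^{l²}`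
in `ℤ[[q]]`.  The infinite sum `S` is prescribed coefficientwise (for each `d` only finitely many
triples contribute, since the exponents tend to infinity, so the `finsum` is the coefficientwise
sum), and the infinite product `P` is prescribed coefficientwise by its stable truncations:
the coefficient of `q^d` in `∏_{i=1}^∞ (1-q^i)` equals that of `∏_{i=1}^d (1-q^i)`. -/
theorem stmt9 (l : ℤ) (S P : PowerSeries ℤ)
    (hS : ∀ d : ℕ, PowerSeries.coeff d S =
      ∑ᶠ (n : ℕ × ℕ × ℕ) (_ : (n.1 : ℤ) - n.2.2 = l), PowerSeries.coeff d (fermTerm n))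
    (hP : ∀ d : ℕ, PowerSeries.coeff d P = PowerSeries.coeff d (qPoch d)) :
    S * P = PowerSeries.X ^ (l.natAbs ^ 2) := by
  ext d
  set k := l.natAbs with hk
  set M := d + k with hMdef
  have hPdvd : (X : PowerSeries ℤ) ^ (d + 1) ∣ P - qPoch M := by
    rw [PowerSeries.X_pow_dvd_iff]
    intro i hi
    rw [map_sub, hP i, qPoch_coeff_stable (le_refl i) (show i ≤ M by omega), sub_self]
  rcases le_or_gt 0 l with hl | hl
  · have hkInt : (k : ℤ) = l := by omega
    set ψ : (Σ _ : ℕ, ℕ) → ℕ × ℕ × ℕ := fun p => (p.2 + k, p.1 - p.2, p.2) with hψ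
    have hSdvd := assembleS l S hS d ψ
      (by
        intro s c h
        simp only [hψ]
        push_cast
        omega)
      (by
        intro s c s' c' h h' heq
        simp only [hψ, Prod.ext_iff] at heq
        omega)
      (by
        rintro ⟨a, b, c⟩ hc
        refine ⟨b + c, c, by omega, ?_, ?_⟩
        · have h1 : b ≤ b ^ 2 := Nat.le_self_pow (by norm_num) b
          have h2 : c ≤ c ^ 2 := Nat.le_self_pow (by norm_num) c
          dsimp only
          omega
        · have hc' : (a : ℤ) - (c : ℤ) = l := hc
          show ((c : ℕ) + k, (b + c) - c, c) = (a, b, c)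
          simp only [Prod.mk.injEq]
          exact ⟨by omega, by omega, trivial⟩)
    have hsum : ∑ p ∈ (range (d + 1)).sigma (fun s => range (s + 1)), fermTerm (ψ p)
        = ∑ s ∈ range (d + 1), ∑ c ∈ range (s + 1), fermTerm (c + k, s - c, c) := by
      rw [Finset.sum_sigma]
    rw [hsum] at hSdvd
    have hcore := coreC k d M (by omega)
    set T := ∑ s ∈ range (d + 1), ∑ c ∈ range (s + 1), fermTerm (c + k, s - c, c) with hT
    have hfinal : (X : PowerSeries ℤ) ^ (d + 1) ∣ S * P - X ^ (k ^ 2) := by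
      have hsplit : S * P - (X : PowerSeries ℤ) ^ (k ^ 2)
          = (S - T) * P + T * (P - qPoch M) + (T * qPoch M - X ^ (k ^ 2)) := by ring
      rw [hsplit]
      exact dvd_add (dvd_add (hSdvd.mul_right P) (Dvd.dvd.mul_left hPdvd T)) hcore
    exact coeff_eq_of_sub_dvd hfinal
  · have hkInt : (k : ℤ) = -l := by omega
    set ψ : (Σ _ : ℕ, ℕ) → ℕ × ℕ × ℕ := fun p => (p.2, p.1 - p.2, p.2 + k) with hψ
    have hSdvd := assembleS l S hS d ψ
      (by
        intro s c h
        simp only [hψ]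
        push_cast
        omega)
      (by
        intro s c s' c' h h' heq
        simp only [hψ, Prod.ext_iff] at heq
        omega)
      (by
        rintro ⟨a, b, c⟩ hc
        refine ⟨b + a, a, by omega, ?_, ?_⟩
        · have h1 : b ≤ b ^ 2 := Nat.le_self_pow (by norm_num) b
          have h2 : a ≤ a ^ 2 := Nat.le_self_pow (by norm_num) a
          dsimp only
          omega
        · have hc' : (a : ℤ) - (c : ℤ) = l := hc
          show ((a : ℕ), (b + a) - a, a + k) = (a, b, c)
          simp only [Prod.mk.injEq]
          exact ⟨trivial, by omega, by omega⟩)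
    have hsum : ∑ p ∈ (range (d + 1)).sigma (fun s => range (s + 1)), fermTerm (ψ p)
        = ∑ s ∈ range (d + 1), ∑ c ∈ range (s + 1), fermTerm (c + k, s - c, c) := by
      rw [Finset.sum_sigma]
      apply Finset.sum_congr rfl
      intro s _
      apply Finset.sum_congr rfl
      intro c _
      exact fermTerm_swap c (s - c) (c + k)
    rw [hsum] at hSdvd
    have hcore := coreC k d M (by omega)
    set T := ∑ s ∈ range (d + 1), ∑ c ∈ range (s + 1), fermTerm (c + k, s - c, c) with hT
    have hfinal : (X : PowerSeries ℤ) ^ (d + 1) ∣ S * P - X ^ (k ^ 2) := by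
      have hsplit : S * P - (X : PowerSeries ℤ) ^ (k ^ 2)
          = (S - T) * P + T * (P - qPoch M) + (T * qPoch M - X ^ (k ^ 2)) := by ring
      rw [hsplit]
      exact dvd_add (dvd_add (hSdvd.mul_right P) (Dvd.dvd.mul_left hPdvd T)) hcore
    exact coeff_eq_of_sub_dvd hfinal
end

section
/- Let m ≥ 0 and l be integers with −m ≤ l ≤ m. Then in the field ℚ(q) of rational functions: ∑_{(n⁺, n⁰, n⁻) ∈ ℕ³, n⁺ + n⁰ + n⁻ = m, n⁺ − n⁻ = l} q^{(n⁺)² + (n⁰)² + (n⁻)² + n⁺n⁰ + n⁰n⁻} / ((q)_{n⁺}(q)_{n⁰}(q)_{n⁻}) = (q^{m²}/(q)_m) · ∑_{ν} q^{(ν+l−m)(ν+l) + ν(ν−m)} · [m, ν]_q · [ν, m−l−ν]_q, where the right-hand sum runs over integers ν with 0 ≤ m − l − ν ≤ ν ≤ m, and possibly negative powers of q are interpreted in ℚ(q). -/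
/-- `(q)_n = ∏_{i=1}^n (1 - q^i)` in the field `ℚ(q)` of rational functions. -/
noncomputable def qPochR (n : ℕ) : RatFunc ℚ :=
  ∏ i ∈ Finset.range n, (1 - RatFunc.X ^ (i + 1))

/-- The Gaussian binomial coefficient `[n, r]_q = (q)_n / ((q)_r (q)_{n-r})` in `ℚ(q)`. -/
noncomputable def gaussBinom (n r : ℕ) : RatFunc ℚ := qPochR n / (qPochR r * qPochR (n - r))

lemma ratX_pow_ne_one (k : ℕ) (hk : k ≠ 0) : (RatFunc.X : RatFunc ℚ) ^ k ≠ 1 := by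
  intro h
  have h' : (Polynomial.X : Polynomial ℚ) ^ k = 1 := by
    apply (RatFunc.algebraMap_injective ℚ)
    simpa [map_pow, RatFunc.algebraMap_X] using h
  have := congrArg Polynomial.natDegree h'
  simp [Polynomial.natDegree_X_pow] at this
  exact hk this

lemma qPochR_ne_zero (n : ℕ) : qPochR n ≠ 0 := by
  unfold qPochR
  apply Finset.prod_ne_zero_iff.mpr
  intro i _
  rw [sub_ne_zero]
  exact fun h => ratX_pow_ne_one (i+1) (Nat.succ_ne_zero i) h.symm

/-- For integers `m ≥ 0` and `-m ≤ l ≤ m`, in `ℚ(q)`: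
`∑_{n⁺+n⁰+n⁻ = m, n⁺-n⁻ = l} q^{(n⁺)²+(n⁰)²+(n⁻)²+n⁺n⁰+n⁰n⁻}/((q)_{n⁺}(q)_{n⁰}(q)_{n⁻})
  = (q^{m²}/(q)_m) · ∑_{0 ≤ m-l-ν ≤ ν ≤ m} q^{(ν+l-m)(ν+l)+ν(ν-m)} [m,ν]_q [ν,m-l-ν]_q`. -/
theorem stmt10 (m : ℕ) (l : ℤ) (hl₁ : -(m : ℤ) ≤ l) (hl₂ : l ≤ m) :
    (∑ᶠ (n : ℕ × ℕ × ℕ)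
        (_ : n.1 + n.2.1 + n.2.2 = m ∧ (n.1 : ℤ) - n.2.2 = l),
        (RatFunc.X : RatFunc ℚ) ^
            (n.1 ^ 2 + n.2.1 ^ 2 + n.2.2 ^ 2 + n.1 * n.2.1 + n.2.1 * n.2.2) /
          (qPochR n.1 * qPochR n.2.1 * qPochR n.2.2)) =
      (RatFunc.X : RatFunc ℚ) ^ (m ^ 2) / qPochR m *
        ∑ᶠ (ν : ℤ) (_ : 0 ≤ (m : ℤ) - l - ν ∧ (m : ℤ) - l - ν ≤ ν ∧ ν ≤ m),
          (RatFunc.X : RatFunc ℚ) ^ ((ν + l - m) * (ν + l) + ν * (ν - m)) *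
            (gaussBinom m ν.toNat * gaussBinom ν.toNat ((m : ℤ) - l - ν).toNat) := by
  classical
  have hX : (RatFunc.X : RatFunc ℚ) ≠ 0 := RatFunc.X_ne_zero
  set A : Finset (ℕ × ℕ × ℕ) :=
    ((Finset.range (m+1)) ×ˢ (Finset.range (m+1)) ×ˢ (Finset.range (m+1))).filter
      (fun n => n.1 + n.2.1 + n.2.2 = m ∧ (n.1 : ℤ) - n.2.2 = l) with hA
  set B : Finset ℤ :=
    (Finset.Icc (0:ℤ) m).filter
      (fun ν => 0 ≤ (m : ℤ) - l - ν ∧ (m : ℤ) - l - ν ≤ ν ∧ ν ≤ m) with hB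
  rw [finsum_cond_eq_sum_of_cond_iff _ (t := A)
    (fun {x} _ => by
      simp only [hA, Finset.mem_filter, Finset.mem_product, Finset.mem_range]
      constructor
      · rintro ⟨h1, h2⟩; exact ⟨⟨by omega, by omega, by omega⟩, h1, h2⟩
      · rintro ⟨-, h⟩; exact h)]
  rw [finsum_cond_eq_sum_of_cond_iff _ (t := B)
    (fun {x} _ => by
      simp only [hB, Finset.mem_filter, Finset.mem_Icc]
      constructor
      · rintro ⟨h1, h2, h3⟩; exact ⟨⟨by omega, h3⟩, h1, h2, h3⟩
      · rintro ⟨-, h⟩; exact h)]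
  rw [Finset.mul_sum]
  refine Finset.sum_nbij' (i := fun n => (m : ℤ) - l - n.2.2)
    (j := fun ν => (((m:ℤ) - ν).toNat, ((2*ν - m + l).toNat, ((m:ℤ) - l - ν).toNat)))
    ?_ ?_ ?_ ?_ ?_
  · intro n hn
    simp only [hA, Finset.mem_filter] at hn
    simp only [hB, Finset.mem_filter, Finset.mem_Icc]
    omega
  · intro ν hν
    simp only [hB, Finset.mem_filter, Finset.mem_Icc] at hν
    simp only [hA, Finset.mem_filter, Finset.mem_product, Finset.mem_range]
    refine ⟨⟨by omega, by omega, by omega⟩, by omega, by omega⟩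
  · intro n hn
    simp only [hA, Finset.mem_filter] at hn
    obtain ⟨a, b, c⟩ := n
    obtain ⟨-, h1, h2⟩ := hn
    simp only at h1 h2 ⊢
    ext <;> simp only <;> omega
  · intro ν hν
    simp only [hB, Finset.mem_filter, Finset.mem_Icc] at hν
    simp only
    omega
  · intro n hn
    simp only [hA, Finset.mem_filter] at hn
    obtain ⟨a, b, c⟩ := n
    obtain ⟨-, h1, h2⟩ := hn
    simp only at h1 h2 ⊢
    have hν : (m:ℤ) - l - c = ((b + c : ℕ) : ℤ) := by push_cast; omega
    rw [hν]
    have h4 : (m:ℤ) - l - ((b + c : ℕ) : ℤ) = ((c : ℕ) : ℤ) := by push_cast; omega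
    rw [h4, Int.toNat_natCast, Int.toNat_natCast]
    have hm : (m:ℤ) = (a:ℤ) + b + c := by omega
    have hsub1 : m - (b + c) = a := by omega
    have hsub2 : b + c - c = b := by omega
    have hpow : (RatFunc.X : RatFunc ℚ) ^ (m ^ 2) *
        (RatFunc.X : RatFunc ℚ) ^
          ((((b+c:ℕ):ℤ) + l - m) * (((b+c:ℕ):ℤ) + l) + ((b+c:ℕ):ℤ) * (((b+c:ℕ):ℤ) - m)) =
        (RatFunc.X : RatFunc ℚ) ^ (a ^ 2 + b ^ 2 + c ^ 2 + a * b + b * c) := by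
      rw [← zpow_natCast (RatFunc.X : RatFunc ℚ) (m ^ 2),
        ← zpow_natCast (RatFunc.X : RatFunc ℚ) (a ^ 2 + b ^ 2 + c ^ 2 + a * b + b * c),
        ← zpow_add₀ hX]
      congr 1
      push_cast
      rw [hm, ← h2]
      ring
    unfold gaussBinom
    rw [hsub1, hsub2]
    have hn0 := qPochR_ne_zero m
    have hna := qPochR_ne_zero a
    have hnb := qPochR_ne_zero b
    have hnc := qPochR_ne_zero c
    have hnbc := qPochR_ne_zero (b + c)
    rw [← hpow]
    field_simp
end

section
/- For every real ε with 0 ≤ ε < 1, the linear map from sl₂(ℂ) to sl₄(ℂ) sending the standard basis elements e ↦ e(ε), h ↦ h(ε), f ↦ f(ε) is an injective homomorphism of Lie algebras; that is, e(ε), h(ε), f(ε) are linearly independent and satisfy [h(ε), e(ε)] = 2 e(ε), [h(ε), f(ε)] = −2 f(ε), [e(ε), f(ε)] = h(ε). In particular, S(ε) = span_ℂ{e(ε), h(ε), f(ε)} is a Lie subalgebra of sl₄(ℂ) isomorphic to sl₂(ℂ). -/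
open Matrix

/-- `e(ε) = E₁₂ − (ε/(1−ε)) E₁₄`. -/
noncomputable def eMat (ε : ℝ) : Matrix (Fin 4) (Fin 4) ℂ :=
  Matrix.single 0 1 1 - ((ε / (1 - ε) : ℝ) : ℂ) • Matrix.single 0 3 1

/-- `h(ε) = E₁₁ − E₂₂ − (ε/√(1−ε)) E₁₃ + (ε/(1−ε)) E₂₄`. -/
noncomputable def hMat (ε : ℝ) : Matrix (Fin 4) (Fin 4) ℂ :=
  Matrix.single 0 0 1 - Matrix.single 1 1 1 -
    ((ε / Real.sqrt (1 - ε) : ℝ) : ℂ) • Matrix.single 0 2 1 +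
    ((ε / (1 - ε) : ℝ) : ℂ) • Matrix.single 1 3 1

/-- `f(ε) = E₂₁ − (ε/√(1−ε)) E₂₃`. -/
noncomputable def fMat (ε : ℝ) : Matrix (Fin 4) (Fin 4) ℂ :=
  Matrix.single 1 0 1 - ((ε / Real.sqrt (1 - ε) : ℝ) : ℂ) • Matrix.single 1 2 1

set_option maxHeartbeats 2000000 in
/-- For `0 ≤ ε < 1` the matrices `e(ε), h(ε), f(ε)` are traceless (so they lie
in `sl₄(ℂ)`), linearly independent, and satisfy the `sl₂`-commutation relations
`[h(ε), e(ε)] = 2e(ε)`, `[h(ε), f(ε)] = −2f(ε)`, `[e(ε), f(ε)] = h(ε)`; that is,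
`e ↦ e(ε), h ↦ h(ε), f ↦ f(ε)` defines an injective Lie algebra homomorphism `sl₂(ℂ) → sl₄(ℂ)`
onto the Lie subalgebra `S(ε) = span{e(ε), h(ε), f(ε)}`. -/
theorem stmt11 (ε : ℝ) (hε0 : 0 ≤ ε) (hε1 : ε < 1) :
    (eMat ε).trace = 0 ∧ (hMat ε).trace = 0 ∧ (fMat ε).trace = 0 ∧
    LinearIndependent ℂ ![eMat ε, hMat ε, fMat ε] ∧
    ⁅hMat ε, eMat ε⁆ = (2 : ℂ) • eMat ε ∧
    ⁅hMat ε, fMat ε⁆ = (-2 : ℂ) • fMat ε ∧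
    ⁅eMat ε, fMat ε⁆ = hMat ε := by
  refine ⟨?_, ?_, ?_, ?_, ?_, ?_, ?_⟩
  · simp [eMat, trace, diag, Fin.sum_univ_four]
  · simp [hMat, trace, diag, Fin.sum_univ_four]
  · simp [fMat, trace, diag, Fin.sum_univ_four]
  · rw [Fintype.linearIndependent_iff]
    intro g hg
    have h01 := congrFun (congrFun hg 0) 1
    have h00 := congrFun (congrFun hg 0) 0
    have h10 := congrFun (congrFun hg 1) 0
    simp [Fin.sum_univ_three, eMat, hMat, fMat, Matrix.single] at h01 h00 h10
    intro i
    fin_cases i <;> first | exact h01 | exact h00 | exact h10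
  · ext i j
    fin_cases i <;> fin_cases j <;>
      simp [eMat, hMat, Ring.lie_def, Matrix.mul_apply, Matrix.single, Fin.sum_univ_four] <;> ring
  · ext i j
    fin_cases i <;> fin_cases j <;>
      simp [fMat, hMat, Ring.lie_def, Matrix.mul_apply, Matrix.single, Fin.sum_univ_four] <;> ring
  · ext i j
    fin_cases i <;> fin_cases j <;>
      simp [eMat, fMat, hMat, Ring.lie_def, Matrix.mul_apply, Matrix.single, Fin.sum_univ_four] <;> ring
end

section
/- As ε tends to 1 from below, the following entrywise limits of 4×4 complex matrices hold: (ε−1)·e(ε) → E_{14}, (1−ε)·h(ε) → E_{24}, and √(1−ε)·f(ε) → −E_{23}. Consequently the limiting spans are lim_{ε→1⁻} ℂ·e(ε) = ℂ·E_{14}, lim_{ε→1⁻} ℂ·h(ε) = ℂ·E_{24}, lim_{ε→1⁻} ℂ·f(ε) = ℂ·E_{23}. -/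
open Matrix

/-- As `ε → 1⁻` (with `0 ≤ ε < 1`), entrywise:
`(ε−1)·e(ε) → E₁₄`, `(1−ε)·h(ε) → E₂₄` and `√(1−ε)·f(ε) → −E₂₃`; consequently the lines
`ℂ·e(ε)`, `ℂ·h(ε)`, `ℂ·f(ε)` tend to `ℂ·E₁₄`, `ℂ·E₂₄`, `ℂ·E₂₃` respectively. -/
theorem stmt12 :
    Filter.Tendsto (fun ε : ℝ => ((ε - 1 : ℝ) : ℂ) • eMat ε)
      (nhdsWithin 1 (Set.Ico 0 1)) (nhds (Matrix.single 0 3 1)) ∧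
    Filter.Tendsto (fun ε : ℝ => ((1 - ε : ℝ) : ℂ) • hMat ε)
      (nhdsWithin 1 (Set.Ico 0 1)) (nhds (Matrix.single 1 3 1)) ∧
    Filter.Tendsto (fun ε : ℝ => ((Real.sqrt (1 - ε) : ℝ) : ℂ) • fMat ε)
      (nhdsWithin 1 (Set.Ico 0 1)) (nhds (-Matrix.single 1 2 1)) := by
  refine ⟨?_, ?_, ?_⟩
  · -- e part
    have hcont : Continuous fun ε : ℝ =>
        ((ε - 1 : ℝ) : ℂ) • Matrix.single (0:Fin 4) (1:Fin 4) (1:ℂ) +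
          ((ε : ℝ) : ℂ) • Matrix.single (0:Fin 4) (3:Fin 4) (1:ℂ) := by
      fun_prop
    have h1 : Filter.Tendsto (fun ε : ℝ =>
        ((ε - 1 : ℝ) : ℂ) • Matrix.single (0:Fin 4) (1:Fin 4) (1:ℂ) +
          ((ε : ℝ) : ℂ) • Matrix.single (0:Fin 4) (3:Fin 4) (1:ℂ))
        (nhdsWithin (1:ℝ) (Set.Ico 0 1)) (nhds (Matrix.single 0 3 1)) := by
      have h0 := (hcont.tendsto 1).mono_left (nhdsWithin_le_nhds (s := Set.Ico 0 1))
      convert h0 using 2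
      simp
    refine h1.congr' ?_
    filter_upwards [self_mem_nhdsWithin] with ε (hε : ε ∈ Set.Ico (0:ℝ) 1)
    have hne : (1:ℝ) - ε ≠ 0 := by have := hε.2; intro h; linarith
    have hc : ((1:ℂ) - (ε:ℝ)) ≠ 0 := by exact_mod_cast sub_ne_zero.mpr (by exact_mod_cast sub_ne_zero.mp hne)
    have key : ((ε - 1 : ℝ) : ℂ) * ((ε / (1 - ε) : ℝ) : ℂ) = -((ε : ℝ) : ℂ) := by
      push_cast
      field_simp
      ring
    simp only [eMat, smul_sub, smul_smul, key, neg_smul, sub_neg_eq_add]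
  · -- h part
    have hcont : Continuous fun ε : ℝ =>
        ((1 - ε : ℝ) : ℂ) • (Matrix.single (0:Fin 4) (0:Fin 4) (1:ℂ) -
            Matrix.single (1:Fin 4) (1:Fin 4) (1:ℂ)) -
          ((ε * Real.sqrt (1 - ε) : ℝ) : ℂ) • Matrix.single (0:Fin 4) (2:Fin 4) (1:ℂ) +
          ((ε : ℝ) : ℂ) • Matrix.single (1:Fin 4) (3:Fin 4) (1:ℂ) := by
      fun_prop
    have h1 : Filter.Tendsto (fun ε : ℝ =>
        ((1 - ε : ℝ) : ℂ) • (Matrix.single (0:Fin 4) (0:Fin 4) (1:ℂ) -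
            Matrix.single (1:Fin 4) (1:Fin 4) (1:ℂ)) -
          ((ε * Real.sqrt (1 - ε) : ℝ) : ℂ) • Matrix.single (0:Fin 4) (2:Fin 4) (1:ℂ) +
          ((ε : ℝ) : ℂ) • Matrix.single (1:Fin 4) (3:Fin 4) (1:ℂ))
        (nhdsWithin (1:ℝ) (Set.Ico 0 1)) (nhds (Matrix.single 1 3 1)) := by
      have h0 := (hcont.tendsto 1).mono_left (nhdsWithin_le_nhds (s := Set.Ico 0 1))
      convert h0 using 2
      simp
    refine h1.congr' ?_
    filter_upwards [self_mem_nhdsWithin] with ε (hε : ε ∈ Set.Ico (0:ℝ) 1)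
    have hpos : (0:ℝ) < 1 - ε := by have := hε.2; linarith
    have hne : (1:ℝ) - ε ≠ 0 := ne_of_gt hpos
    have hs : Real.sqrt (1 - ε) ≠ 0 := by positivity
    have key1 : ((1 - ε : ℝ) : ℂ) * ((ε / Real.sqrt (1 - ε) : ℝ) : ℂ)
        = ((ε * Real.sqrt (1 - ε) : ℝ) : ℂ) := by
      norm_cast
      rw [mul_comm (1 - ε) (ε / Real.sqrt (1 - ε)), div_mul_eq_mul_div, mul_div_assoc,
        Real.div_sqrt]
    have key2 : ((1 - ε : ℝ) : ℂ) * ((ε / (1 - ε) : ℝ) : ℂ) = ((ε : ℝ) : ℂ) := by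
      norm_cast
      field_simp
    simp only [hMat, smul_sub, smul_add, smul_smul, key1, key2]
  · -- f part
    have hcont : Continuous fun ε : ℝ =>
        ((Real.sqrt (1 - ε) : ℝ) : ℂ) • Matrix.single (1:Fin 4) (0:Fin 4) (1:ℂ) -
          ((ε : ℝ) : ℂ) • Matrix.single (1:Fin 4) (2:Fin 4) (1:ℂ) := by
      fun_prop
    have h1 : Filter.Tendsto (fun ε : ℝ =>
        ((Real.sqrt (1 - ε) : ℝ) : ℂ) • Matrix.single (1:Fin 4) (0:Fin 4) (1:ℂ) -
          ((ε : ℝ) : ℂ) • Matrix.single (1:Fin 4) (2:Fin 4) (1:ℂ))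
        (nhdsWithin (1:ℝ) (Set.Ico 0 1)) (nhds (-Matrix.single 1 2 1)) := by
      have h0 := (hcont.tendsto 1).mono_left (nhdsWithin_le_nhds (s := Set.Ico 0 1))
      convert h0 using 2
      simp
    refine h1.congr' ?_
    filter_upwards [self_mem_nhdsWithin] with ε (hε : ε ∈ Set.Ico (0:ℝ) 1)
    have hpos : (0:ℝ) < 1 - ε := by have := hε.2; linarith
    have hs : Real.sqrt (1 - ε) ≠ 0 := by positivity
    have key : ((Real.sqrt (1 - ε) : ℝ) : ℂ) * ((ε / Real.sqrt (1 - ε) : ℝ) : ℂ)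
        = ((ε : ℝ) : ℂ) := by
      norm_cast
      field_simp
    simp only [fMat, smul_sub, smul_smul, key]
end
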